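/- arXiv:1902.10373 — 4 statements merged into one kernel-verified Lean document; each statement's English description precedes it below -/
import Mathlib

section
/- Define the Kepler map k from finite binary words to rationals by: k(empty word) = 1/2, and if k(w) = p/q (in lowest terms) then k(w0) = p/(p+q) and k(w1) = q/(p+q), where w0 and w1 denote w with the symbol 0 (respectively 1) appended. Then k is a bijection from the set of all finite words over {0,1} onto ℚ ∩ (0,1). In particular, every rational in (0,1) occurs at exactly one node of the Kepler tree, and the path from the root to it is unique. -/
/-- The Kepler tree rule: if a node carries the rational `r = p/q` (in lowest terms), then
its left child carries `r/(r+1) = p/(p+q)` and its right child carries `1/(r+1) = q/(p+q)`.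
(`false` = left child, `true` = right child.) -/
def keplerStep (r : ℚ) (b : Bool) : ℚ := if b then 1 / (r + 1) else r / (r + 1)

/-- The rational at the node of the Kepler tree indexed by the binary word `w`:
the root `1/2` is indexed by the empty word, and appending `false` (resp. `true`) moves to
the left (resp. right) child. -/
def keplerNode (w : List Bool) : ℚ := w.foldl keplerStep (1 / 2)

lemma keplerNode_append (w : List Bool) (b : Bool) :
    keplerNode (w ++ [b]) = keplerStep (keplerNode w) b := by
  simp [keplerNode, List.foldl_append]

lemma keplerStep_mem {r : ℚ} (h0 : 0 < r) (h1 : r < 1) (b : Bool) :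
    0 < keplerStep r b ∧ keplerStep r b < 1 := by
  have hr1 : (0:ℚ) < r + 1 := by linarith
  cases b <;> simp only [keplerStep, if_true, if_false, Bool.false_eq_true] <;>
    refine ⟨by positivity, ?_⟩ <;> rw [div_lt_one hr1] <;> linarith

lemma keplerNode_mem (w : List Bool) : 0 < keplerNode w ∧ keplerNode w < 1 := by
  have key : ∀ (w : List Bool) (r : ℚ), 0 < r → r < 1 →
      0 < w.foldl keplerStep r ∧ w.foldl keplerStep r < 1 := by
    intro w
    induction w with
    | nil => intro r h0 h1; exact ⟨h0, h1⟩
    | cons b t ih =>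
      intro r h0 h1
      obtain ⟨a, c⟩ := keplerStep_mem h0 h1 b
      exact ih _ a c
  exact key w (1/2) (by norm_num) (by norm_num)

lemma keplerStep_false_lt {r : ℚ} (h0 : 0 < r) (h1 : r < 1) :
    keplerStep r false < 1/2 := by
  have hr1 : (0:ℚ) < r + 1 := by linarith
  simp only [keplerStep, Bool.false_eq_true, if_false]
  rw [div_lt_div_iff₀ hr1 (by norm_num)]
  linarith

lemma keplerStep_true_gt {r : ℚ} (h0 : 0 < r) (h1 : r < 1) :
    1/2 < keplerStep r true := by
  have hr1 : (0:ℚ) < r + 1 := by linarith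
  simp only [keplerStep, if_true]
  rw [div_lt_div_iff₀ (by norm_num) hr1]
  linarith

lemma keplerStep_inj {r r' : ℚ} {b b' : Bool} (hr0 : 0 < r) (hr1 : r < 1)
    (hr0' : 0 < r') (hr1' : r' < 1) (h : keplerStep r b = keplerStep r' b') :
    b = b' ∧ r = r' := by
  have p1 : (0:ℚ) < r + 1 := by linarith
  have p2 : (0:ℚ) < r' + 1 := by linarith
  cases b <;> cases b'
  · refine ⟨rfl, ?_⟩
    simp only [keplerStep, Bool.false_eq_true, if_false] at h
    rw [div_eq_div_iff p1.ne' p2.ne'] at h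
    nlinarith
  · exfalso
    have h1 := keplerStep_false_lt hr0 hr1
    have h2 := keplerStep_true_gt hr0' hr1'
    rw [h] at h1; linarith
  · exfalso
    have h1 := keplerStep_true_gt hr0 hr1
    have h2 := keplerStep_false_lt hr0' hr1'
    rw [h] at h1; linarith
  · refine ⟨rfl, ?_⟩
    simp only [keplerStep, if_true] at h
    rw [div_eq_div_iff p1.ne' p2.ne'] at h
    linarith

lemma keplerStep_ne_half {r : ℚ} (h0 : 0 < r) (h1 : r < 1) (b : Bool) :
    keplerStep r b ≠ 1/2 := by
  cases b
  · exact ne_of_lt (keplerStep_false_lt h0 h1)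
  · exact ne_of_gt (keplerStep_true_gt h0 h1)

lemma keplerNode_inj : Function.Injective keplerNode := by
  intro w w' h
  induction w using List.reverseRecOn generalizing w' with
  | nil =>
    cases w' using List.reverseRecOn with
    | nil => rfl
    | append_singleton t b =>
      exfalso
      obtain ⟨m0, m1⟩ := keplerNode_mem t
      rw [keplerNode_append] at h
      exact keplerStep_ne_half m0 m1 b h.symm
  | append_singleton t b ih =>
    cases w' using List.reverseRecOn with
    | nil =>
      exfalso
      obtain ⟨m0, m1⟩ := keplerNode_mem t
      rw [keplerNode_append] at h
      exact keplerStep_ne_half m0 m1 b h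
    | append_singleton t' b' =>
      rw [keplerNode_append, keplerNode_append] at h
      obtain ⟨m0, m1⟩ := keplerNode_mem t
      obtain ⟨m0', m1'⟩ := keplerNode_mem t'
      obtain ⟨hb, hr⟩ := keplerStep_inj m0 m1 m0' m1' h
      rw [ih hr, hb]

/-- Key computation for the left child. -/
lemma keplerStep_false_eq (s A B : ℚ) (hA : 0 < A) (hAB : A < B)
    (hs : s = A / (B - A)) : keplerStep s false = A / B := by
  subst hs
  have h1 : (0:ℚ) < B - A := by linarith
  have hB : (0:ℚ) < B := by linarith
  simp only [keplerStep, Bool.false_eq_true, if_false]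
  have h2 : A / (B - A) + 1 = B / (B - A) := by field_simp; ring
  rw [h2]
  rw [div_eq_div_iff (by positivity) hB.ne']
  field_simp

/-- Key computation for the right child. -/
lemma keplerStep_true_eq (s A B : ℚ) (hA : 0 < A) (hAB : A < B)
    (hs : s = (B - A) / A) : keplerStep s true = A / B := by
  subst hs
  have h1 : (0:ℚ) < B - A := by linarith
  have hB : (0:ℚ) < B := by linarith
  simp only [keplerStep, if_true]
  have h2 : (B - A) / A + 1 = B / A := by field_simp; ring
  rw [h2, one_div_div]

lemma keplerNode_surj_aux : ∀ (n : ℕ) (q : ℚ), q.den = n → 0 < q → q < 1 →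
    ∃ w, keplerNode w = q := by
  intro n
  induction n using Nat.strong_induction_on with
  | _ n ih =>
    intro q hqn h0 h1
    have hnum : 0 < q.num := Rat.num_pos.mpr h0
    have hden : (0:ℚ) < (q.den : ℚ) := by positivity
    have hq : (q.num : ℚ) / (q.den : ℚ) = q := Rat.num_div_den q
    have hApos : (0:ℚ) < (q.num : ℚ) := by exact_mod_cast hnum
    have hlt : (q.num : ℚ) < (q.den : ℚ) := by
      have := (div_lt_one hden).mp (by rw [hq]; exact h1)
      linarith
    have hltZ : q.num < (q.den : ℤ) := by exact_mod_cast hlt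
    have habs : q.num.natAbs ≤ q.den := by omega
    rcases lt_trichotomy q (1/2) with hh | hh | hh
    · -- left child case: q < 1/2
      have h2 : 2 * q.num < (q.den : ℤ) := by
        have h3 := (div_lt_div_iff₀ hden (by norm_num : (0:ℚ) < 2)).mp
          (by rw [hq]; exact hh)
        have h4 : ((2 * q.num : ℤ) : ℚ) < (((q.den : ℤ)) : ℚ) := by push_cast; linarith
        exact_mod_cast h4
      have hcop : q.num.natAbs.Coprime (q.den - q.num.natAbs) :=
        (Nat.coprime_sub_self_right habs).mpr q.reduced
      set r : ℚ := ⟨q.num, q.den - q.num.natAbs, by omega, hcop⟩ with hrdef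
      have hrnum : r.num = q.num := rfl
      have hrden : r.den = q.den - q.num.natAbs := rfl
      have hcastZ : ((q.den - q.num.natAbs : ℕ) : ℤ) = (q.den : ℤ) - q.num := by omega
      have hcast : ((q.den - q.num.natAbs : ℕ) : ℚ) = (q.den : ℚ) - (q.num : ℚ) := by
        have h5 : (((q.den - q.num.natAbs : ℕ) : ℤ) : ℚ) = (((q.den : ℤ) - q.num : ℤ) : ℚ) := by
          rw [hcastZ]
        push_cast at h5
        exact h5
      have hrval : ((q.num : ℚ)) / ((q.den : ℚ) - (q.num : ℚ)) = r := by
        have h5 := Rat.num_div_den r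
        rw [hrnum, hrden, hcast] at h5
        exact h5
      have hBA : (q.num : ℚ) < (q.den : ℚ) - (q.num : ℚ) := by
        have h6 : ((2 * q.num : ℤ) : ℚ) < (((q.den : ℤ)) : ℚ) := by exact_mod_cast h2
        push_cast at h6
        linarith
      have hr0 : 0 < r := by
        rw [← hrval]
        exact div_pos hApos (by linarith)
      have hr1 : r < 1 := by
        rw [← hrval, div_lt_one (by linarith)]
        exact hBA
      obtain ⟨w, hw⟩ := ih r.den (by rw [hrden, ← hqn]; omega) r rfl hr0 hr1
      refine ⟨w ++ [false], ?_⟩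
      rw [keplerNode_append, hw]
      exact (keplerStep_false_eq r _ _ hApos hlt hrval.symm).trans hq
    · exact ⟨[], hh.symm⟩
    · -- right child case: q > 1/2
      have h2 : (q.den : ℤ) < 2 * q.num := by
        have h3 := (div_lt_div_iff₀ (by norm_num : (0:ℚ) < 2) hden).mp
          (by rw [hq]; exact hh)
        have h4 : (((q.den : ℤ)) : ℚ) < ((2 * q.num : ℤ) : ℚ) := by push_cast; linarith
        exact_mod_cast h4
      have hnatabs : ((q.den : ℤ) - q.num).natAbs = q.den - q.num.natAbs := by omega
      have hcop : ((q.den : ℤ) - q.num).natAbs.Coprime q.num.natAbs := by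
        rw [hnatabs]
        exact ((Nat.coprime_sub_self_right habs).mpr q.reduced).symm
      set r : ℚ := ⟨(q.den : ℤ) - q.num, q.num.natAbs, by omega, hcop⟩ with hrdef
      have hrnum : r.num = (q.den : ℤ) - q.num := rfl
      have hrden : r.den = q.num.natAbs := rfl
      have hcast : ((q.num.natAbs : ℕ) : ℚ) = (q.num : ℚ) := by
        rw [← Int.cast_natCast (R := ℚ), Int.natAbs_of_nonneg hnum.le]
      have hrval : ((q.den : ℚ) - (q.num : ℚ)) / (q.num : ℚ) = r := by
        have h5 := Rat.num_div_den r
        rw [hrnum, hrden, hcast] at h5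
        rw [← h5]
        push_cast
        ring_nf
      have hr0 : 0 < r := by
        rw [← hrval]
        exact div_pos (by linarith) hApos
      have hr1 : r < 1 := by
        rw [← hrval, div_lt_one hApos]
        have h6 : (((q.den : ℤ)) : ℚ) < ((2 * q.num : ℤ) : ℚ) := by exact_mod_cast h2
        push_cast at h6
        linarith
      have hdenlt : r.den < n := by rw [hrden, ← hqn]; omega
      obtain ⟨w, hw⟩ := ih r.den hdenlt r rfl hr0 hr1
      refine ⟨w ++ [true], ?_⟩
      rw [keplerNode_append, hw]
      exact (keplerStep_true_eq r _ _ hApos hlt hrval.symm).trans hq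

/-- **The Kepler map is a bijection onto `ℚ ∩ (0,1)`.**  The map `k` sending a finite
binary word to the rational at the corresponding node of the Kepler tree (root `1/2`;
if `k w = p/q` in lowest terms then `k (w0) = p/(p+q)` and `k (w1) = q/(p+q)`) is a
bijection from the set of all finite binary words onto the rationals in `(0,1)`.
In particular every rational in `(0,1)` occurs at exactly one node of the Kepler tree. -/
theorem keplerNode_bijective :
    (∀ w : List Bool,
      keplerNode (w ++ [false]) =
        ((keplerNode w).num : ℚ) / (((keplerNode w).num : ℚ) + ((keplerNode w).den : ℚ)) ∧
      keplerNode (w ++ [true]) =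
        ((keplerNode w).den : ℚ) / (((keplerNode w).num : ℚ) + ((keplerNode w).den : ℚ))) ∧
    Function.Injective keplerNode ∧
    Set.range keplerNode = {q : ℚ | 0 < q ∧ q < 1} := by
  refine ⟨?_, keplerNode_inj, ?_⟩
  · intro w
    obtain ⟨h0, h1⟩ := keplerNode_mem w
    have hnum : 0 < (keplerNode w).num := Rat.num_pos.mpr h0
    have hA : (0:ℚ) < ((keplerNode w).num : ℚ) := by exact_mod_cast hnum
    have hB : (0:ℚ) < ((keplerNode w).den : ℚ) := by positivity
    have hq : ((keplerNode w).num : ℚ) / ((keplerNode w).den : ℚ) = keplerNode w :=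
      Rat.num_div_den (keplerNode w)
    constructor
    · rw [keplerNode_append]
      refine keplerStep_false_eq _ _ _ hA (by linarith) ?_
      rw [add_sub_cancel_left]
      exact hq.symm
    · rw [keplerNode_append]
      refine keplerStep_true_eq _ _ _ hB (by linarith) ?_
      rw [add_sub_cancel_right]
      exact hq.symm
  · ext q
    simp only [Set.mem_range, Set.mem_setOf_eq]
    constructor
    · rintro ⟨w, rfl⟩
      exact keplerNode_mem w
    · rintro ⟨h0, h1⟩
      exact keplerNode_surj_aux q.den q rfl h0 h1
end

section
/- Let (k_i)_{i≥1} enumerate ℚ ∩ (0,1) by reading the Kepler tree top-down, left-to-right (so k_1 = 1/2, and the children of k_n are k_{2n} and k_{2n+1}), and let 𝒦 = (a_j)_{j≥1} be the infinite sequence of positive integers obtained by concatenating the reduced continued fraction expansions of k_1, k_2, k_3, …. Fix k ≥ 1 and a block d = (d_1, …, d_k) of positive integers. Call an occurrence of d starting at position p in 𝒦 'divided' if the k digits a_p, …, a_{p+k−1} do not all come from the continued fraction expansion of a single rational k_i (i.e., some boundary between the expansions of consecutive rationals lies strictly inside the occurrence). Then the number of divided occurrences of d among the first n digits of 𝒦,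 divided by n, tends to 0 as n → ∞. -/
/-- Value of a finite regular continued fraction
`[a₁, a₂, …, aₙ] = 1/(a₁ + 1/(a₂ + ⋯ + 1/aₙ))`. -/
def cfvQ : List ℕ → ℚ
  | [] => 0
  | a :: t => 1 / (a + cfvQ t)

/-- Fuelled continued fraction digit algorithm: for `r ∈ (0,1)` produce the digit `⌊1/r⌋`
and recurse on the fractional part of `1/r`. -/
def cfeAux : ℕ → ℚ → List ℕ
  | 0, _ => []
  | fuel + 1, r =>
    if 0 < r ∧ r < 1 then (⌊r⁻¹⌋).toNat :: cfeAux fuel (Int.fract r⁻¹) else []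

/-- The reduced regular continued fraction expansion `[a₁, …, aₙ]` (all `aᵢ ≥ 1`, `aₙ ≥ 2`)
of a rational `r ∈ (0,1)`; the empty list for `r ∉ (0,1)`.  (Each step of the digit
algorithm strictly decreases the denominator, so `r.den` steps of fuel always suffice.) -/
def cfe (r : ℚ) : List ℕ := cfeAux r.den r

/-- The top-down, left-to-right enumeration of the Kepler tree: `keplerSeq 1 = 1/2` is the
root, and the children of `keplerSeq n` are `keplerSeq (2n)` (left) and `keplerSeq (2n+1)`
(right).  (`keplerSeq i` is the `i`-th term `k_i`; `keplerSeq 0` is junk.) -/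
def keplerSeq (n : ℕ) : ℚ :=
  if n ≤ 1 then 1 / 2
  else keplerStep (keplerSeq (n / 2)) (decide (n % 2 = 1))
  termination_by n
  decreasing_by exact Nat.div_lt_self (by omega) (by norm_num)

/-- The reduced continued fraction expansion of the `(i+1)`-st rational `k_{i+1}` of the
Kepler tree (in top-down, left-to-right order). -/
def keplerCFE (i : ℕ) : List ℕ := cfe (keplerSeq (i + 1))

/-- The infinite sequence `𝒦 = [2, 3, 1, 2, 4, 1, 3, 2, 2, 1, 1, 2, 5, …]` of digits
obtained by concatenating the reduced continued fraction expansions of the rationals of the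
Kepler tree read top-down, left-to-right; `keplerDigits n` is its `(n+1)`-st digit.
(Each expansion is nonempty, so the concatenation of the first `n + 1` expansions has more
than `n` digits.) -/
def keplerDigits (n : ℕ) : ℕ := ((List.range (n + 1)).flatMap keplerCFE).getD n 0

/-- `keplerOffset i` is the position in `𝒦` at which the continued fraction expansion of
the `(i+1)`-st rational of the Kepler tree starts: the digits of `k_{i+1}` occupy positions
`keplerOffset i, …, keplerOffset i + (keplerCFE i).length - 1` of `𝒦`. -/
def keplerOffset (i : ℕ) : ℕ := ∑ j ∈ Finset.range i, (keplerCFE j).length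

/-- `dividedCount d n` is the number of *divided* occurrences of the block `d` among the
first `n` digits of `𝒦`: occurrences whose digits do not all come from the continued
fraction expansion of a single rational of the Kepler tree, i.e. such that some boundary
between consecutive expansions lies strictly inside the occurrence. -/
noncomputable def dividedCount (d : List ℕ) (n : ℕ) : ℕ :=
  Set.ncard {p : ℕ | p + d.length ≤ n ∧
    (∀ j < d.length, keplerDigits (p + j) = d.getD j 0) ∧
    ¬∃ i : ℕ, keplerOffset i ≤ p ∧ p + d.length ≤ keplerOffset i + (keplerCFE i).length}

/- ### Denominator lemmas -/

lemma den_fract_le (x : ℚ) : (Int.fract x).den ≤ x.den := by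
  have hE : Int.fract x = x + ((-⌊x⌋ : ℤ) : ℚ) := by
    rw [Int.fract]; push_cast; ring
  have h := Rat.add_den_dvd x ((-⌊x⌋ : ℤ) : ℚ)
  rw [← hE, Rat.den_intCast, mul_one] at h
  exact Nat.le_of_dvd x.pos h

lemma den_inv_le {r : ℚ} (h0 : 0 < r) : ((r⁻¹).den : ℤ) ≤ r.num := by
  have h := Rat.den_dvd (r.den : ℤ) r.num
  rw [← Rat.inv_def] at h
  exact Int.le_of_dvd (Rat.num_pos.mpr h0) h

lemma num_lt_den {r : ℚ} (h1 : r < 1) : r.num < (r.den : ℤ) := by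
  have hd : (0:ℚ) < (r.den : ℚ) := by exact_mod_cast r.pos
  have h := Rat.num_div_den r
  rw [← h, div_lt_one hd] at h1
  exact_mod_cast h1

lemma den_fract_inv_lt {r : ℚ} (h0 : 0 < r) (h1 : r < 1) :
    (Int.fract r⁻¹).den < r.den := by
  have h2 : ((Int.fract r⁻¹).den : ℤ) ≤ (r⁻¹).den := by exact_mod_cast den_fract_le r⁻¹
  have h3 := den_inv_le h0
  have h4 := num_lt_den h1
  exact_mod_cast lt_of_le_of_lt (h2.trans h3) h4

/- ### Fuel irrelevance -/

lemma cfeAux_congr : ∀ (n : ℕ) (r : ℚ) (f₁ f₂ : ℕ), r.den ≤ n → r.den ≤ f₁ → r.den ≤ f₂ →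
    cfeAux f₁ r = cfeAux f₂ r := by
  intro n
  induction n using Nat.strong_induction_on with
  | _ n ih =>
    intro r f₁ f₂ hn h1 h2
    have hdpos := r.pos
    obtain ⟨g₁, rfl⟩ : ∃ g, f₁ = g + 1 := ⟨f₁ - 1, by omega⟩
    obtain ⟨g₂, rfl⟩ : ∃ g, f₂ = g + 1 := ⟨f₂ - 1, by omega⟩
    show (if 0 < r ∧ r < 1 then (⌊r⁻¹⌋).toNat :: cfeAux g₁ (Int.fract r⁻¹) else [])
      = (if 0 < r ∧ r < 1 then (⌊r⁻¹⌋).toNat :: cfeAux g₂ (Int.fract r⁻¹) else [])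
    by_cases h : 0 < r ∧ r < 1
    · rw [if_pos h, if_pos h]
      have hlt := den_fract_inv_lt h.1 h.2
      have := ih (Int.fract r⁻¹).den (by omega) (Int.fract r⁻¹) g₁ g₂ le_rfl (by omega) (by omega)
      rw [this]
    · rw [if_neg h, if_neg h]

lemma cfeAux_eq_cfe (r : ℚ) (f : ℕ) (h : r.den ≤ f) : cfeAux f r = cfe r :=
  cfeAux_congr (max f r.den) r f r.den (le_max_right _ _) h le_rfl

lemma cfe_step {r : ℚ} (h0 : 0 < r) (h1 : r < 1) :
    cfe r = (⌊r⁻¹⌋).toNat :: cfe (Int.fract r⁻¹) := by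
  have hdpos := r.pos
  have hlt := den_fract_inv_lt h0 h1
  obtain ⟨g, hg⟩ : ∃ g, r.den = g + 1 := ⟨r.den - 1, by omega⟩
  have h : cfe r = cfeAux (g + 1) r := by rw [cfe, hg]
  rw [h]
  show (if 0 < r ∧ r < 1 then (⌊r⁻¹⌋).toNat :: cfeAux g (Int.fract r⁻¹) else [])
    = (⌊r⁻¹⌋).toNat :: cfe (Int.fract r⁻¹)
  rw [if_pos ⟨h0, h1⟩, cfeAux_eq_cfe _ _ (by omega)]

lemma cfe_right {r : ℚ} (h0 : 0 < r) (h1 : r < 1) :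
    cfe (1 / (r + 1)) = 1 :: cfe r := by
  have hr1 : (0:ℚ) < r + 1 := by linarith
  have h0' : 0 < 1 / (r + 1) := by positivity
  have h1' : 1 / (r + 1) < 1 := by rw [div_lt_one hr1]; linarith
  rw [cfe_step h0' h1']
  have hinv : (1 / (r + 1))⁻¹ = r + 1 := by rw [one_div, inv_inv]
  have hf0 : ⌊r⌋ = 0 := Int.floor_eq_zero_iff.mpr ⟨le_of_lt h0, h1⟩
  have hfl : ⌊r + 1⌋ = 1 := by rw [Int.floor_add_one, hf0]; rfl
  have hfr : Int.fract (r + 1) = r := by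
    rw [Int.fract_add_one, Int.fract_eq_self.mpr ⟨le_of_lt h0, h1⟩]
  rw [hinv, hfl, hfr]
  rfl

lemma cfe_left_len {r : ℚ} (h0 : 0 < r) (h1 : r < 1) :
    (cfe (r / (r + 1))).length = (cfe r).length := by
  have hr1 : (0:ℚ) < r + 1 := by linarith
  have h0' : 0 < r / (r + 1) := div_pos h0 hr1
  have h1' : r / (r + 1) < 1 := by rw [div_lt_one hr1]; linarith
  rw [cfe_step h0' h1', cfe_step h0 h1]
  have hinv : (r / (r + 1))⁻¹ = 1 + r⁻¹ := by
    rw [inv_div, add_div, div_self (ne_of_gt h0), one_div]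
  rw [hinv, Int.fract_one_add]
  simp

/- ### keplerSeq in (0,1) -/

lemma keplerSeq_mem (n : ℕ) : 0 < keplerSeq n ∧ keplerSeq n < 1 := by
  induction n using Nat.strong_induction_on with
  | _ n ih =>
    rw [keplerSeq]
    by_cases h : n ≤ 1
    · rw [if_pos h]; norm_num
    · rw [if_neg h]
      have hh := ih (n / 2) (Nat.div_lt_self (by omega) (by norm_num))
      exact keplerStep_mem hh.1 hh.2 _

/- ### popcount -/

def pc (n : ℕ) : ℕ :=
  if n = 0 then 0 else pc (n / 2) + n % 2
  termination_by n
  decreasing_by exact Nat.div_lt_self (by omega) (by norm_num)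

lemma pc_zero : pc 0 = 0 := by simp [pc]

lemma pc_rec (n : ℕ) : pc n = pc (n / 2) + n % 2 := by
  rcases eq_or_ne n 0 with rfl | h
  · simp [pc_zero]
  · rw [pc, if_neg h]

lemma pc_one : pc 1 = 1 := by rw [pc_rec]; simp [pc_zero]

lemma pc_pos {n : ℕ} (h : n ≠ 0) : 0 < pc n := by
  induction n using Nat.strong_induction_on with
  | _ n ih =>
    rw [pc_rec]
    rcases Nat.mod_two_eq_zero_or_one n with h2 | h2
    · have hn2 : n / 2 ≠ 0 := by omega
      have := ih (n / 2) (Nat.div_lt_self (by omega) (by norm_num)) hn2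
      omega
    · omega

/- ### length of CFE = popcount -/

lemma cfe_zero : cfe 0 = [] := by rw [cfe]; rfl

lemma cfe_half : cfe ((1:ℚ)/2) = [2] := by
  have e1 : ((1:ℚ)/2)⁻¹ = 2 := by norm_num
  rw [cfe_step (by norm_num) (by norm_num), e1]
  have e2 : Int.fract (2:ℚ) = 0 := by norm_num [Int.fract]
  rw [e2, cfe_zero]
  norm_num
  decide

lemma len_cfe_keplerSeq : ∀ n : ℕ, 1 ≤ n → (cfe (keplerSeq n)).length = pc n := by
  intro n
  induction n using Nat.strong_induction_on with
  | _ n ih =>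
    intro hn
    by_cases h : n ≤ 1
    · have hone : n = 1 := by omega
      subst hone
      rw [keplerSeq, if_pos le_rfl, pc_one, cfe_half]
      rfl
    · rw [keplerSeq, if_neg h]
      have hmem := keplerSeq_mem (n / 2)
      have hlen := ih (n / 2) (Nat.div_lt_self (by omega) (by norm_num)) (by omega)
      rcases Nat.mod_two_eq_zero_or_one n with h2 | h2
      · rw [h2]
        show (cfe (keplerStep (keplerSeq (n / 2)) false)).length = pc n
        rw [keplerStep]
        simp only [Bool.false_eq_true, if_false]
        rw [cfe_left_len hmem.1 hmem.2, hlen, pc_rec n, h2]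
        omega
      · rw [h2]
        show (cfe (keplerStep (keplerSeq (n / 2)) true)).length = pc n
        rw [keplerStep, if_pos rfl, cfe_right hmem.1 hmem.2]
        rw [List.length_cons, hlen, pc_rec n, h2]

lemma len_keplerCFE (i : ℕ) : (keplerCFE i).length = pc (i + 1) :=
  len_cfe_keplerSeq (i + 1) (by omega)

/- ### sums of popcount -/

def pcS (m : ℕ) : ℕ := ∑ j ∈ Finset.range m, pc j

lemma pc_mul_pow_add : ∀ (t a r : ℕ), r < 2 ^ t → pc (a * 2 ^ t + r) = pc a + pc r := by
  intro t
  induction t with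
  | zero => intro a r hr; interval_cases r; simp [pc_zero]
  | succ t ih =>
    intro a r hr
    have hp : 2 ^ (t + 1) = 2 * 2 ^ t := by ring
    have hB : a * 2 ^ (t + 1) = 2 * (a * 2 ^ t) := by ring
    rw [pc_rec (a * 2 ^ (t + 1) + r), hB]
    have h1 : (2 * (a * 2 ^ t) + r) / 2 = a * 2 ^ t + r / 2 := by omega
    have h2 : (2 * (a * 2 ^ t) + r) % 2 = r % 2 := by omega
    rw [h1, h2, ih a (r / 2) (by omega), pc_rec r]
    ring

lemma pcS_pow (t : ℕ) : 2 * pcS (2 ^ t) = t * 2 ^ t := by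
  induction t with
  | zero => simp [pcS, pc_zero]
  | succ t ih =>
    have hps : (2:ℕ) ^ (t + 1) = 2 ^ t + 2 ^ t := by ring
    have hsplit : pcS (2 ^ (t + 1)) = pcS (2 ^ t) + ∑ i ∈ Finset.range (2 ^ t), pc (2 ^ t + i) := by
      rw [pcS, hps, Finset.sum_range_add]; rfl
    have hterm : ∀ i ∈ Finset.range (2 ^ t), pc (2 ^ t + i) = 1 + pc i := by
      intro i hi
      have hh := pc_mul_pow_add t 1 i (Finset.mem_range.mp hi)
      rw [one_mul] at hh
      rw [hh, pc_one]
    rw [Finset.sum_congr rfl hterm, Finset.sum_add_distrib, Finset.sum_const,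
      Finset.card_range, smul_eq_mul, mul_one] at hsplit
    have hre : ∑ i ∈ Finset.range (2 ^ t), pc i = pcS (2 ^ t) := rfl
    rw [hre] at hsplit
    calc 2 * pcS (2 ^ (t + 1)) = 2 * (2 * pcS (2 ^ t)) + 2 * 2 ^ t := by rw [hsplit]; ring
      _ = 2 * (t * 2 ^ t) + 2 * 2 ^ t := by rw [ih]
      _ = (t + 1) * 2 ^ (t + 1) := by ring

lemma pcS_mono {a b : ℕ} (h : a ≤ b) : pcS a ≤ pcS b :=
  Finset.sum_le_sum_of_subset (Finset.range_subset_range.mpr h)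

lemma pcS_block (q t : ℕ) : q * t * 2 ^ t ≤ 2 * pcS (q * 2 ^ t) := by
  induction q with
  | zero => simp
  | succ q ih =>
    have hps : (q + 1) * 2 ^ t = q * 2 ^ t + 2 ^ t := by ring
    have hsplit : pcS ((q + 1) * 2 ^ t)
        = pcS (q * 2 ^ t) + ∑ i ∈ Finset.range (2 ^ t), pc (q * 2 ^ t + i) := by
      rw [pcS, hps, Finset.sum_range_add]; rfl
    have hterm : ∀ i ∈ Finset.range (2 ^ t), pc i ≤ pc (q * 2 ^ t + i) := by
      intro i hi
      rw [pc_mul_pow_add t q i (Finset.mem_range.mp hi)]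
      omega
    have hsum : pcS (2 ^ t) ≤ ∑ i ∈ Finset.range (2 ^ t), pc (q * 2 ^ t + i) :=
      Finset.sum_le_sum hterm
    have hp := pcS_pow t
    calc (q + 1) * t * 2 ^ t = q * t * 2 ^ t + t * 2 ^ t := by ring
      _ ≤ 2 * pcS (q * 2 ^ t) + 2 * pcS (2 ^ t) := by
          have := Nat.add_le_add ih (le_of_eq hp.symm)
          omega
      _ ≤ 2 * pcS ((q + 1) * 2 ^ t) := by rw [hsplit]; omega

/- ### keplerOffset facts -/

lemma keplerOffset_eq_sum (i : ℕ) : keplerOffset i = ∑ j ∈ Finset.range i, pc (j + 1) := by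
  unfold keplerOffset
  exact Finset.sum_congr rfl (fun j _ => len_keplerCFE j)

lemma pcS_le_keplerOffset (i : ℕ) : pcS i ≤ keplerOffset i := by
  have h : keplerOffset i = pcS (i + 1) := by
    rw [keplerOffset_eq_sum, pcS, Finset.sum_range_succ' pc i, pc_zero, add_zero]
  rw [h]
  exact pcS_mono (by omega)

lemma keplerOffset_succ (i : ℕ) : keplerOffset (i + 1) = keplerOffset i + (keplerCFE i).length :=
  Finset.sum_range_succ _ i

lemma self_le_keplerOffset (i : ℕ) : i ≤ keplerOffset i := by
  induction i with
  | zero => simp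
  | succ i ih =>
    rw [keplerOffset_succ, len_keplerCFE]
    have := pc_pos (n := i + 1) (by omega)
    omega

lemma keplerOffset_superlinear (C : ℕ) : ∃ M : ℕ, ∀ i, M ≤ i → C * i ≤ keplerOffset i := by
  set t := 4 * C + 4 with ht
  refine ⟨2 ^ (t + 1), fun i hi => ?_⟩
  set q := i / 2 ^ t with hq
  have hA : 0 < 2 ^ t := by positivity
  have hqi : q * 2 ^ t ≤ i := Nat.div_mul_le_self i (2 ^ t)
  have hqi2 : i < q * 2 ^ t + 2 ^ t := by
    rw [hq]; exact Nat.lt_div_mul_add hA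
  have hil : 2 ^ t + 2 ^ t ≤ i := by
    have h : (2:ℕ) ^ (t + 1) = 2 ^ t + 2 ^ t := by ring
    omega
  have h1 : 2 * (C * i) ≤ t * (i - 2 ^ t) := by
    calc 2 * (C * i) = C * (2 * i) := by ring
      _ ≤ C * (4 * (i - 2 ^ t)) := Nat.mul_le_mul_left C (by omega)
      _ = (4 * C) * (i - 2 ^ t) := by ring
      _ ≤ (4 * C + 4) * (i - 2 ^ t) := Nat.mul_le_mul (by omega) le_rfl
      _ = t * (i - 2 ^ t) := by rw [ht]
  have h3 : t * (i - 2 ^ t) ≤ q * t * 2 ^ t := by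
    calc t * (i - 2 ^ t) ≤ t * (q * 2 ^ t) := Nat.mul_le_mul_left t (by omega)
      _ = q * t * 2 ^ t := by ring
  have h4 := pcS_block q t
  have h5 : 2 * pcS (q * 2 ^ t) ≤ 2 * keplerOffset i :=
    Nat.mul_le_mul le_rfl ((pcS_mono hqi).trans (pcS_le_keplerOffset i))
  have h7 : 2 * (C * i) ≤ 2 * keplerOffset i := h1.trans (h3.trans (h4.trans h5))
  exact Nat.le_of_mul_le_mul_left h7 (by norm_num)

/- ### position coverage -/

lemma exists_block (p : ℕ) : ∃ i, keplerOffset i ≤ p ∧ p < keplerOffset (i + 1) := by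
  classical
  have h0 : keplerOffset 0 ≤ p := by simp [keplerOffset]
  have hspec := Nat.findGreatest_spec (P := fun i => keplerOffset i ≤ p) (Nat.zero_le p) h0
  set i := Nat.findGreatest (fun i => keplerOffset i ≤ p) p with hi
  refine ⟨i, hspec, ?_⟩
  by_cases hle : i + 1 ≤ p
  · have hg := Nat.findGreatest_is_greatest (P := fun i => keplerOffset i ≤ p)
      (k := i + 1) (by omega) hle
    omega
  · have hs := self_le_keplerOffset (i + 1)
    omega

/- ### counting bound -/

lemma dividedCount_le (d : List ℕ) (n C M : ℕ) (hC : 0 < C)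
    (hM : ∀ i, M ≤ i → C * i ≤ keplerOffset i) :
    dividedCount d n ≤ (M + n / C + 1) * d.length := by
  classical
  set k := d.length with hk
  set I : Finset ℕ := Finset.range (M + n / C + 1) with hI
  set F : Finset ℕ := I.biUnion (fun j => Finset.Ico (keplerOffset j - k) (keplerOffset j)) with hF
  have hsub : {p : ℕ | p + d.length ≤ n ∧
      (∀ j < d.length, keplerDigits (p + j) = d.getD j 0) ∧
      ¬∃ i : ℕ, keplerOffset i ≤ p ∧ p + d.length ≤ keplerOffset i + (keplerCFE i).length} ⊆ ↑F := by
    intro p hp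
    obtain ⟨hpn, _, hndiv⟩ := hp
    obtain ⟨i, hi1, hi2⟩ := exists_block p
    have hlt : keplerOffset (i + 1) < p + k := by
      by_contra hcon
      push_neg at hcon
      rw [keplerOffset_succ] at hcon
      exact hndiv ⟨i, hi1, hcon⟩
    have hjn : keplerOffset (i + 1) ≤ n := by omega
    have hjI : i + 1 ∈ I := by
      rw [hI, Finset.mem_range]
      by_cases hcase : M ≤ i + 1
      · have hsl := hM (i + 1) hcase
        have hdiv : i + 1 ≤ n / C :=
          (Nat.le_div_iff_mul_le hC).mpr (by rw [Nat.mul_comm]; exact le_trans hsl hjn)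
        have hnn : 0 ≤ n / C := Nat.zero_le _
        omega
      · have hnn : 0 ≤ n / C := Nat.zero_le _
        omega
    simp only [hF, Finset.coe_biUnion, Set.mem_iUnion, Finset.mem_coe]
    exact ⟨i + 1, hjI, Finset.mem_Ico.mpr ⟨by omega, hi2⟩⟩
  have h1 : dividedCount d n ≤ F.card := by
    rw [dividedCount, ← Set.ncard_coe_finset]
    exact Set.ncard_le_ncard hsub F.finite_toSet
  have h2 : F.card ≤ ∑ j ∈ I, (Finset.Ico (keplerOffset j - k) (keplerOffset j)).card :=
    Finset.card_biUnion_le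
  have h3 : ∀ j ∈ I, (Finset.Ico (keplerOffset j - k) (keplerOffset j)).card ≤ k := by
    intro j _
    rw [Nat.card_Ico]
    omega
  have h4 : ∑ j ∈ I, (Finset.Ico (keplerOffset j - k) (keplerOffset j)).card ≤ I.card * k := by
    calc ∑ j ∈ I, (Finset.Ico (keplerOffset j - k) (keplerOffset j)).card
        ≤ ∑ _j ∈ I, k := Finset.sum_le_sum h3
      _ = I.card * k := by rw [Finset.sum_const, smul_eq_mul]
  have h5 : I.card = M + n / C + 1 := Finset.card_range _
  calc dividedCount d n ≤ F.card := h1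
    _ ≤ ∑ j ∈ I, (Finset.Ico (keplerOffset j - k) (keplerOffset j)).card := h2
    _ ≤ I.card * k := h4
    _ = (M + n / C + 1) * k := by rw [h5]


/-- **Divided occurrences are negligible.**  For every nonempty block `d = (d₁, …, d_k)` of
positive integers, the number of divided occurrences of `d` among the first `n` digits of
the concatenated Kepler continued fraction sequence `𝒦`, divided by `n`, tends to `0`. -/
theorem dividedCount_frequency_zero (d : List ℕ) (hd : d ≠ []) (hd' : ∀ x ∈ d, 0 < x) :
    Filter.Tendsto (fun n => (dividedCount d n : ℝ) / n) Filter.atTop (nhds 0) := by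
  rw [Metric.tendsto_atTop]
  intro ε hε
  have hε2 : (0:ℝ) < ε / 2 := by linarith
  have hkpos : 0 < d.length := List.length_pos_iff.mpr hd
  have hkr : (0:ℝ) < d.length := by exact_mod_cast hkpos
  obtain ⟨C, hC⟩ := exists_nat_gt (max 0 (2 * (d.length : ℝ) / ε))
  have hCr : (0:ℝ) < C := lt_of_le_of_lt (le_max_left _ _) hC
  have hCpos : 0 < C := by exact_mod_cast hCr
  have hCb : 2 * (d.length : ℝ) / ε < C := lt_of_le_of_lt (le_max_right _ _) hC
  have hkC : (d.length : ℝ) / C < ε / 2 := by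
    rw [div_lt_iff₀ hCr]
    rw [div_lt_iff₀ hε] at hCb
    linarith
  obtain ⟨M, hM⟩ := keplerOffset_superlinear C
  obtain ⟨N, hN⟩ := exists_nat_gt (max 1 ((d.length : ℝ) * ((M : ℝ) + 1) / (ε / 2)))
  refine ⟨N, fun n hn => ?_⟩
  have hnN : (N : ℝ) ≤ n := Nat.cast_le.mpr hn
  have h1n : (1:ℝ) ≤ n := le_trans (le_of_lt (lt_of_le_of_lt (le_max_left _ _) hN)) hnN
  have hnr : (0:ℝ) < n := by linarith
  have hnpos : 0 < n := by exact_mod_cast hnr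
  have hbound := dividedCount_le d n C M hCpos hM
  have hb1 : (dividedCount d n : ℝ) ≤ ((M + n / C + 1 : ℕ) : ℝ) * d.length := by
    exact_mod_cast hbound
  have hb2 : ((M + n / C + 1 : ℕ) : ℝ) ≤ ((M : ℝ) + 1) + (n : ℝ) / C := by
    have h := Nat.cast_div_le (α := ℝ) (m := n) (n := C)
    have he : ((M + n / C + 1 : ℕ) : ℝ) = (M : ℝ) + ((n / C : ℕ) : ℝ) + 1 := by
      push_cast; ring
    rw [he]; linarith
  have hnum : (dividedCount d n : ℝ) ≤ (((M : ℝ) + 1) + (n : ℝ) / C) * d.length :=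
    hb1.trans (mul_le_mul_of_nonneg_right hb2 (by positivity))
  have hfn : (dividedCount d n : ℝ) / n ≤ (((M : ℝ) + 1) + (n : ℝ) / C) * d.length / n := by
    gcongr
  have hC0 : (C:ℝ) ≠ 0 := ne_of_gt hCr
  have hn0 : (n:ℝ) ≠ 0 := ne_of_gt hnr
  have hsplit : (((M : ℝ) + 1) + (n : ℝ) / C) * (d.length : ℝ) / n
      = (d.length : ℝ) * ((M : ℝ) + 1) / n + (d.length : ℝ) / C := by
    field_simp
  have hterm1 : (d.length : ℝ) * ((M : ℝ) + 1) / n < ε / 2 := by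
    have hnb : (d.length : ℝ) * ((M : ℝ) + 1) / (ε / 2) < n :=
      lt_of_lt_of_le (lt_of_le_of_lt (le_max_right _ _) hN) hnN
    rw [div_lt_iff₀ hnr]
    rw [div_lt_iff₀ hε2] at hnb
    linarith
  have hfinal : (dividedCount d n : ℝ) / n < ε := by
    calc (dividedCount d n : ℝ) / n ≤ (((M : ℝ) + 1) + (n : ℝ) / C) * d.length / n := hfn
      _ = (d.length : ℝ) * ((M : ℝ) + 1) / n + (d.length : ℝ) / C := hsplit
      _ < ε / 2 + ε / 2 := add_lt_add hterm1 hkC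
      _ = ε := by ring
  rw [Real.dist_eq, sub_zero, abs_of_nonneg (by positivity)]
  exact hfinal
end

section
/- Define q: ℤ≥1 → ℚ ∩ (0,1) as follows: writing n = 2^{a_1} + 2^{a_2} + ⋯ + 2^{a_k} with 0 ≤ a_1 < a_2 < ⋯ < a_k, set q(n) = 1/(k'+2) when n = 2^{k'} is a power of two, and otherwise q(n) = [a_1+1, a_2−a_1, a_3−a_2, …, a_{k−1}−a_{k−2}, a_k−a_{k−1}+1] (the value of this finite continued fraction). Then q(1) = 1/2 and, for every n ≥ 1, if q(n) = p/s in lowest terms, then q(2n) = p/(p+s) and q(2n+1) = s/(p+s). Consequently, q(n) = k_n for all n ≥ 1, where (k_i)_{i≥1} is the top-down, left-to-right enumeration of the Kepler tree. -/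
/-- Difference digits `[a₂-a₁, a₃-a₂, …, a_{k-1}-a_{k-2}, a_k-a_{k-1}+1]` of a list of
binary exponents, given the previous exponent. -/
def qDiffs (prev : ℕ) : List ℕ → List ℕ
  | [] => []
  | [b] => [b - prev + 1]
  | b :: t => (b - prev) :: qDiffs b t

/-- The continued fraction digits `[a₁+1, a₂-a₁, …, a_{k-1}-a_{k-2}, a_k-a_{k-1}+1]`
associated to a list of binary exponents `[a₁, …, a_k]`. -/
def qDigits : List ℕ → List ℕ
  | [] => []
  | a :: t => (a + 1) :: qDiffs a t

/-- The map `q : ℤ≥1 → ℚ ∩ (0,1)` of Viader, Paradís and Bibiloni: writing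
`n = 2^{a₁} + 2^{a₂} + ⋯ + 2^{a_k}` with `0 ≤ a₁ < a₂ < ⋯ < a_k` (the increasing list of
set binary digits of `n`), set `q n = [k'+2]` if `n = 2^{k'}` is a power of two, and
otherwise `q n = [a₁+1, a₂-a₁, a₃-a₂, …, a_{k-1}-a_{k-2}, a_k-a_{k-1}+1]` (the value of
this finite continued fraction). -/
def qFun (n : ℕ) : ℚ :=
  match (List.range (n + 1)).filter (fun a => n.testBit a) with
  | [a] => cfvQ [a + 2]
  | e => cfvQ (qDigits e)

/-- increasing list of set bit positions -/
def bits (n : ℕ) : List ℕ := (List.range (n + 1)).filter (fun a => n.testBit a)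

lemma filter_range_stable (n m k : ℕ) (hm : n < 2 ^ m) (hk : m ≤ k) :
    (List.range k).filter (fun a => n.testBit a)
      = (List.range m).filter (fun a => n.testBit a) := by
  induction k, hk using Nat.le_induction with
  | base => rfl
  | succ k hk ih =>
    rw [List.range_succ, List.filter_append, ih]
    have hb : n.testBit k = false :=
      Nat.testBit_eq_false_of_lt
        (lt_of_lt_of_le hm (Nat.pow_le_pow_right (by norm_num) hk))
    simp [hb]

lemma bits_two_mul (n : ℕ) (hn : 1 ≤ n) :
    bits (2 * n) = (bits n).map (fun a => a + 1) := by
  have h1 : 2 * n < 2 ^ (n + 2) := by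
    have := Nat.lt_two_pow_self (n := n)
    calc 2 * n < 2 * 2 ^ n := by omega
      _ ≤ 2 ^ (n + 2) := by rw [pow_succ, pow_succ]; nlinarith [pow_pos (show (0:ℕ) < 2 by norm_num) n]
  have h2 : n + 2 ≤ 2 * n + 1 := by omega
  unfold bits
  rw [filter_range_stable (2 * n) (n + 2) (2 * n + 1) h1 h2]
  rw [List.range_succ_eq_map (n := n + 1)]
  have hb0 : (2 * n).testBit 0 = false := by
    rw [Nat.testBit_zero]; simp [Nat.mul_mod_right]
  rw [List.filter_cons]
  simp only [hb0, Bool.false_eq_true, if_false]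
  rw [List.filter_map]
  have : ((fun a => (2 * n).testBit a) ∘ Nat.succ) = (fun a => n.testBit a) := by
    funext a
    simp [Function.comp, Nat.testBit_succ, Nat.mul_div_cancel_left n (show 0 < 2 by norm_num)]
  rw [this]

lemma bits_two_mul_add_one (n : ℕ) :
    bits (2 * n + 1) = 0 :: (bits n).map (fun a => a + 1) := by
  have h1 : 2 * n + 1 < 2 ^ (n + 2) := by
    have := Nat.lt_two_pow_self (n := n)
    calc 2 * n + 1 < 2 * (2 ^ n) + 2 := by omega
      _ ≤ 2 ^ (n + 2) := by rw [pow_succ, pow_succ]; nlinarith [pow_pos (show (0:ℕ) < 2 by norm_num) n]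
  have h2 : n + 2 ≤ 2 * n + 1 + 1 := by omega
  unfold bits
  rw [filter_range_stable (2 * n + 1) (n + 2) (2 * n + 1 + 1) h1 h2]
  rw [List.range_succ_eq_map (n := n + 1)]
  have hb0 : (2 * n + 1).testBit 0 = true := by
    rw [Nat.testBit_zero]; simp [Nat.mul_add_mod]
  rw [List.filter_cons]
  simp only [hb0, if_true]
  rw [List.filter_map]
  have : ((fun a => (2 * n + 1).testBit a) ∘ Nat.succ) = (fun a => n.testBit a) := by
    funext a
    have : (2 * n + 1) / 2 = n := by omega
    simp [Function.comp, Nat.testBit_succ, this]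
  rw [this]

lemma bits_ne_nil (n : ℕ) (hn : 1 ≤ n) : bits n ≠ [] := by
  intro h
  have h' : ∀ a, n.testBit a = false := by
    intro a
    by_cases ha : a < n + 1
    · have := List.filter_eq_nil_iff.mp h a (List.mem_range.mpr ha)
      simpa using this
    · exact Nat.testBit_eq_false_of_lt
        (lt_of_lt_of_le ((Nat.lt_two_pow_self (n := n))) (Nat.pow_le_pow_right (by norm_num) (by omega)))
  have : n = 0 := Nat.eq_of_testBit_eq fun i => by rw [h' i, Nat.zero_testBit]
  omega

lemma cfvQ_nonneg : ∀ l : List ℕ, 0 ≤ cfvQ l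
  | [] => le_refl 0
  | a :: t => by
    have := cfvQ_nonneg t
    simp only [cfvQ]
    have : (0:ℚ) ≤ (a:ℚ) + cfvQ t := by positivity
    exact one_div_nonneg.mpr this

lemma qDiffs_shift : ∀ (t : List ℕ) (p : ℕ),
    qDiffs (p + 1) (t.map (fun a => a + 1)) = qDiffs p t
  | [], p => rfl
  | [b], p => by simp [qDiffs]
  | b :: c :: t, p => by
    have ih := qDiffs_shift (c :: t) b
    simp only [List.map_cons] at ih
    simp only [List.map_cons, qDiffs]
    rw [ih]
    congr 1
    omega

lemma qFun_single (n a : ℕ) (h : bits n = [a]) : qFun n = 1 / ((a : ℚ) + 2) := by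
  unfold qFun
  rw [show (List.range (n + 1)).filter (fun a => n.testBit a) = [a] from h]
  simp [cfvQ]

lemma qFun_cons2 (n a b : ℕ) (t : List ℕ) (h : bits n = a :: b :: t) :
    qFun n = 1 / ((a : ℚ) + 1 + cfvQ (qDiffs a (b :: t))) := by
  unfold qFun
  rw [show (List.range (n + 1)).filter (fun a => n.testBit a) = a :: b :: t from h]
  simp [qDigits, cfvQ]

lemma qFun_pos (n : ℕ) (hn : 1 ≤ n) : 0 < qFun n := by
  rcases h : bits n with _ | ⟨a, _ | ⟨b, t⟩⟩
  · exact absurd h (bits_ne_nil n hn)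
  · rw [qFun_single n a h]; positivity
  · rw [qFun_cons2 n a b t h]
    have := cfvQ_nonneg (qDiffs a (b :: t))
    positivity

lemma step_left (n : ℕ) (hn : 1 ≤ n) : qFun (2 * n) = qFun n / (qFun n + 1) := by
  rcases h : bits n with _ | ⟨a, _ | ⟨b, t⟩⟩
  · exact absurd h (bits_ne_nil n hn)
  · have h2 : bits (2 * n) = [a + 1] := by rw [bits_two_mul n hn, h]; rfl
    rw [qFun_single n a h, qFun_single (2 * n) (a + 1) h2]
    have : (0:ℚ) < (a:ℚ) + 2 := by positivity
    push_cast
    field_simp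
    ring
  · have h2 : bits (2 * n) = (a + 1) :: (b + 1) :: t.map (fun c => c + 1) := by
      rw [bits_two_mul n hn, h]; rfl
    rw [qFun_cons2 n a b t h, qFun_cons2 (2 * n) (a + 1) (b + 1) _ h2]
    have hsh : qDiffs (a + 1) ((b + 1) :: t.map (fun c => c + 1)) = qDiffs a (b :: t) := by
      have := qDiffs_shift (b :: t) a
      simpa using this
    rw [hsh]
    set x := cfvQ (qDiffs a (b :: t)) with hx
    have hx0 : 0 ≤ x := cfvQ_nonneg _
    have hd : (0:ℚ) < (a:ℚ) + 1 + x := by positivity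
    have hd' : ((a:ℚ) + 1 + x) ≠ 0 := ne_of_gt hd
    have hd2 : ((a:ℚ) + 1 + 1 + x) ≠ 0 := by positivity
    push_cast
    field_simp
    ring

lemma step_right (n : ℕ) (hn : 1 ≤ n) : qFun (2 * n + 1) = 1 / (qFun n + 1) := by
  rcases h : bits n with _ | ⟨a, _ | ⟨b, t⟩⟩
  · exact absurd h (bits_ne_nil n hn)
  · have h2 : bits (2 * n + 1) = 0 :: [a + 1] := by rw [bits_two_mul_add_one n, h]; rfl
    rw [qFun_single n a h, qFun_cons2 (2 * n + 1) 0 (a + 1) [] h2]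
    have hq : qDiffs 0 [a + 1] = [a + 2] := by simp [qDiffs]
    rw [hq]
    have : (0:ℚ) < (a:ℚ) + 2 := by positivity
    simp only [cfvQ]
    push_cast
    ring
  · have h2 : bits (2 * n + 1) = 0 :: (a + 1) :: (b + 1) :: t.map (fun c => c + 1) := by
      rw [bits_two_mul_add_one n, h]; rfl
    rw [qFun_cons2 n a b t h, qFun_cons2 (2 * n + 1) 0 (a + 1) _ h2]
    have hq : qDiffs 0 ((a + 1) :: (b + 1) :: t.map (fun c => c + 1))
        = (a + 1) :: qDiffs a (b :: t) := by
      have hsh2 := qDiffs_shift (b :: t) a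
      simp only [List.map_cons] at hsh2
      simp only [qDiffs]
      rw [hsh2]
      norm_num
    rw [hq]
    set x := cfvQ (qDiffs a (b :: t)) with hx
    have hx0 : 0 ≤ x := cfvQ_nonneg _
    have hd : (0:ℚ) < (a:ℚ) + 1 + x := by positivity
    simp only [cfvQ]
    push_cast
    ring

/-- `q 1 = 1/2`; if `q n = p/s` in lowest terms then `q (2n) = p/(p+s)` and
`q (2n+1) = s/(p+s)`; consequently `q n = k_n` for all `n ≥ 1`, where `(k_i)` is the
top-down, left-to-right enumeration of the Kepler tree. -/
theorem qFun_eq_keplerSeq :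
    qFun 1 = 1 / 2 ∧
    (∀ n : ℕ, 1 ≤ n →
      qFun (2 * n) = ((qFun n).num : ℚ) / (((qFun n).num : ℚ) + ((qFun n).den : ℚ)) ∧
      qFun (2 * n + 1) = ((qFun n).den : ℚ) / (((qFun n).num : ℚ) + ((qFun n).den : ℚ))) ∧
    (∀ n : ℕ, 1 ≤ n → qFun n = keplerSeq n) := by
  have h1 : qFun 1 = 1 / 2 := by
    have hb : bits 1 = [0] := by decide
    rw [qFun_single 1 0 hb]; norm_num
  refine ⟨h1, ?_, ?_⟩
  · intro n hn
    set r := qFun n with hr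
    have hrpos : 0 < r := qFun_pos n hn
    have hden : (0:ℚ) < (r.den : ℚ) := by exact_mod_cast r.pos
    have hnum : (0:ℚ) < (r.num : ℚ) := by exact_mod_cast Rat.num_pos.mpr hrpos
    have hsum : (r.num : ℚ) + (r.den : ℚ) ≠ 0 := by positivity
    have hr1 : r + 1 ≠ 0 := by positivity
    have key1 : r / (r + 1) = (r.num : ℚ) / ((r.num : ℚ) + (r.den : ℚ)) := by
      conv_lhs => rw [← Rat.num_div_den r]
      field_simp
    have key2 : 1 / (r + 1) = (r.den : ℚ) / ((r.num : ℚ) + (r.den : ℚ)) := by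
      conv_lhs => rw [← Rat.num_div_den r]
      field_simp
    exact ⟨(step_left n hn).trans key1, (step_right n hn).trans key2⟩
  · intro n hn
    induction n using Nat.strong_induction_on with
    | _ n ih =>
      rcases eq_or_lt_of_le hn with h | h
      · rw [← h, h1, keplerSeq]; norm_num
      · have h2 : 2 ≤ n := h
        rcases Nat.even_or_odd n with ⟨m, hm⟩ | ⟨m, hm⟩
        · have hm1 : 1 ≤ m := by omega
          have ihm := ih m (by omega) hm1
          rw [keplerSeq]
          rw [if_neg (by omega)]
          have hdiv : n / 2 = m := by omega
          have hmod : n % 2 = 0 := by omega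
          rw [hdiv, hmod]
          rw [show n = 2 * m by omega, step_left m hm1, ihm]
          simp [keplerStep]
        · have hm1 : 1 ≤ m := by omega
          have ihm := ih m (by omega) hm1
          rw [keplerSeq]
          rw [if_neg (by omega)]
          have hdiv : n / 2 = m := by omega
          have hmod : n % 2 = 1 := by omega
          rw [hdiv, hmod]
          rw [show n = 2 * m + 1 by omega, step_right m hm1, ihm]
          simp [keplerStep]
end

section
/- Let (k_i)_{i≥1} enumerate ℚ ∩ (0,1) by reading the Kepler tree top-down, left-to-right. Then (k_i) is distributed according to the Minkowski question mark function: for every x ∈ [0,1], the number of indices 1 ≤ i ≤ n with k_i ≤ x, divided by n, converges to ?(x) as n → ∞, where ?(0) = 0, ?(1) = 1, and for x ∈ (0,1) with regular continued fraction digits a_1(x), a_2(x), … (a finite list when x is rational), ?(x) = 2 ∑_{i≥1} (−1)^{i+1} 2^{−(a_1(x) + ⋯ + a_i(x))}. -/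
/-- The Gauss map `T x = 1/x - ⌊1/x⌋` (with `T 0 = 0`, since `1/0 = 0` in Lean). -/
noncomputable def gaussMap (x : ℝ) : ℝ := Int.fract x⁻¹

/-- The `(i+1)`-st regular continued fraction digit of `x`: `a_{i+1}(x) = ⌊1 / Tⁱ(x)⌋`. -/
noncomputable def cfDigit (x : ℝ) (i : ℕ) : ℕ := (⌊(gaussMap^[i] x)⁻¹⌋).toNat

/-- Minkowski's question mark function on `[0,1]`:
`?(x) = 2 ∑_{i≥1} (-1)^{i+1} 2^{-(a₁(x) + ⋯ + aᵢ(x))}`, where `a₁(x), a₂(x), …` are the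
regular continued fraction digits of `x` (obtained from the Gauss map).  For rational `x`
the digit list is finite — the Gauss map orbit hits `0` and all later digits are `0` — and
the series reduces to the corresponding finite sum; in particular `?(0) = 0` and
`?(1) = 1`. -/
noncomputable def questionMark (x : ℝ) : ℝ :=
  2 * ∑' i : ℕ, if cfDigit x i = 0 then 0
      else (-1 : ℝ) ^ i * ((2 : ℝ) ^ (∑ j ∈ Finset.range (i + 1), cfDigit x j))⁻¹




noncomputable def qmTerm (x : ℝ) (i : ℕ) : ℝ :=
  if cfDigit x i = 0 then 0
  else (-1 : ℝ) ^ i * ((2 : ℝ) ^ (∑ j ∈ Finset.range (i + 1), cfDigit x j))⁻¹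

lemma gaussMap_mem {x : ℝ} (_ : x ∈ Set.Icc (0:ℝ) 1) : gaussMap x ∈ Set.Icc (0:ℝ) 1 :=
  ⟨Int.fract_nonneg _, le_of_lt (Int.fract_lt_one _)⟩

lemma iter_mem {x : ℝ} (hx : x ∈ Set.Icc (0:ℝ) 1) (i : ℕ) : gaussMap^[i] x ∈ Set.Icc (0:ℝ) 1 := by
  induction i with
  | zero => exact hx
  | succ n ih => rw [Function.iterate_succ_apply']; exact gaussMap_mem ih

lemma cfDigit_zero_iff {x : ℝ} (hx : x ∈ Set.Icc (0:ℝ) 1) (i : ℕ) :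
    cfDigit x i = 0 ↔ gaussMap^[i] x = 0 := by
  have h := iter_mem hx i
  constructor
  · intro h0
    by_contra hne
    have hpos : 0 < gaussMap^[i] x := lt_of_le_of_ne h.1 (Ne.symm hne)
    have h1 : (1:ℝ) ≤ (gaussMap^[i] x)⁻¹ := one_le_inv_iff₀.mpr ⟨hpos, h.2⟩
    have : (1:ℤ) ≤ ⌊(gaussMap^[i] x)⁻¹⌋ := by exact_mod_cast Int.le_floor.mpr (by exact_mod_cast h1)
    simp [cfDigit] at h0; omega
  · intro h0; simp [cfDigit, h0]

lemma gaussMap_zero : gaussMap 0 = 0 := by simp [gaussMap]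

lemma cfDigit_zero_succ {x : ℝ} (hx : x ∈ Set.Icc (0:ℝ) 1) {i : ℕ}
    (h : cfDigit x i = 0) : cfDigit x (i+1) = 0 := by
  rw [cfDigit_zero_iff hx] at h ⊢
  rw [Function.iterate_succ_apply', h, gaussMap_zero]

lemma cfDigit_zero_mono {x : ℝ} (hx : x ∈ Set.Icc (0:ℝ) 1) {i j : ℕ} (hij : j ≤ i)
    (h0 : cfDigit x j = 0) : cfDigit x i = 0 := by
  induction hij with
  | refl => exact h0
  | step _ ih => exact cfDigit_zero_succ hx ih

lemma cfDigit_ne_zero_of_le {x : ℝ} (hx : x ∈ Set.Icc (0:ℝ) 1) {i j : ℕ} (hij : j ≤ i)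
    (h : cfDigit x i ≠ 0) : cfDigit x j ≠ 0 :=
  fun h0 => h (cfDigit_zero_mono hx hij h0)

noncomputable def dsum (x : ℝ) (i : ℕ) : ℕ := ∑ j ∈ Finset.range (i + 1), cfDigit x j

lemma qmTerm_def (x : ℝ) (i : ℕ) :
    qmTerm x i = if cfDigit x i = 0 then 0 else (-1 : ℝ) ^ i * ((2 : ℝ) ^ (dsum x i))⁻¹ := rfl

lemma dsum_ge {x : ℝ} (hx : x ∈ Set.Icc (0:ℝ) 1) {i : ℕ} (h : cfDigit x i ≠ 0) :
    i + 1 ≤ dsum x i := by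
  have : ∀ j ∈ Finset.range (i+1), 1 ≤ cfDigit x j := by
    intro j hj
    have := cfDigit_ne_zero_of_le hx (by simpa using Nat.lt_succ_iff.mp (Finset.mem_range.mp hj)) h
    omega
  calc i + 1 = ∑ _j ∈ Finset.range (i+1), 1 := by simp
    _ ≤ dsum x i := Finset.sum_le_sum this

lemma dsum_lt {x : ℝ} (h : cfDigit x (i+1) ≠ 0) : dsum x i < dsum x (i+1) := by
  have : dsum x (i+1) = dsum x i + cfDigit x (i+1) := Finset.sum_range_succ _ _
  omega

lemma abs_qmTerm_le {x : ℝ} (hx : x ∈ Set.Icc (0:ℝ) 1) (i : ℕ) :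
    |qmTerm x i| ≤ (1/2 : ℝ) ^ (i + 1) := by
  rw [qmTerm_def]
  split
  · simp only [abs_zero]; positivity
  · rename_i h
    rw [abs_mul, abs_pow, abs_neg, abs_one, one_pow, one_mul, abs_inv, abs_pow]
    rw [abs_of_nonneg (by norm_num : (0:ℝ) ≤ 2)]
    rw [one_div, inv_pow]
    exact inv_anti₀ (by positivity) (by
      calc (2:ℝ) ^ (i+1) ≤ 2 ^ dsum x i := by
            apply pow_le_pow_right₀ (by norm_num) (dsum_ge hx h))

lemma summable_qmTerm {x : ℝ} (hx : x ∈ Set.Icc (0:ℝ) 1) : Summable (qmTerm x) := by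
  apply Summable.of_abs
  apply Summable.of_nonneg_of_le (fun i => abs_nonneg _) (abs_qmTerm_le hx)
  have : Summable (fun i : ℕ => (1/2:ℝ)^i * (1/2)) :=
    (summable_geometric_of_lt_one (by norm_num) (by norm_num)).mul_right _
  exact this.congr (fun i => by rw [pow_succ])

lemma qmTerm_even_nonneg (x : ℝ) (k : ℕ) : 0 ≤ qmTerm x (2*k) := by
  rw [qmTerm_def]; split
  · exact le_refl 0
  · rw [pow_mul]
    norm_num

lemma qmTerm_odd_nonpos (x : ℝ) (k : ℕ) : qmTerm x (2*k+1) ≤ 0 := by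
  rw [qmTerm_def]; split
  · exact le_refl 0
  · rw [pow_succ, pow_mul]
    norm_num
    try positivity

lemma qmTerm_abs_even {x : ℝ} {k : ℕ} (h : cfDigit x (2*k) ≠ 0) :
    qmTerm x (2*k) = ((2:ℝ) ^ dsum x (2*k))⁻¹ := by
  rw [qmTerm_def, if_neg h, pow_mul]; norm_num

lemma qmTerm_abs_odd {x : ℝ} {k : ℕ} (h : cfDigit x (2*k+1) ≠ 0) :
    qmTerm x (2*k+1) = -((2:ℝ) ^ dsum x (2*k+1))⁻¹ := by
  rw [qmTerm_def, if_neg h, pow_succ, pow_mul]; norm_num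

lemma pair_lower {x : ℝ} (hx : x ∈ Set.Icc (0:ℝ) 1) (k : ℕ) :
    0 ≤ qmTerm x (2*k) + qmTerm x (2*k+1) := by
  by_cases h : cfDigit x (2*k+1) = 0
  · rw [qmTerm_def x (2*k+1), if_pos h, add_zero]
    exact qmTerm_even_nonneg x k
  · have he : cfDigit x (2*k) ≠ 0 := cfDigit_ne_zero_of_le hx (by omega) h
    rw [qmTerm_abs_even he, qmTerm_abs_odd h]
    have := dsum_lt (i := 2*k) h
    have h2 : ((2:ℝ) ^ dsum x (2*k+1))⁻¹ ≤ ((2:ℝ) ^ dsum x (2*k))⁻¹ := by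
      apply inv_anti₀ (by positivity)
      exact pow_le_pow_right₀ (by norm_num) (le_of_lt this)
    linarith

lemma pair_upper {x : ℝ} (hx : x ∈ Set.Icc (0:ℝ) 1) (k : ℕ) :
    qmTerm x (2*k+1) + qmTerm x (2*k+2) ≤ 0 := by
  by_cases h : cfDigit x (2*k+2) = 0
  · rw [qmTerm_def x (2*k+2), if_pos h, add_zero]
    exact qmTerm_odd_nonpos x k
  · have ho : cfDigit x (2*k+1) ≠ 0 := cfDigit_ne_zero_of_le hx (by omega) h
    have he2 : qmTerm x (2*k+2) = ((2:ℝ) ^ dsum x (2*k+2))⁻¹ := by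
      have : 2*k+2 = 2*(k+1) := by ring
      rw [this, qmTerm_abs_even (this ▸ h)]
    rw [qmTerm_abs_odd ho, he2]
    have hlt : dsum x (2*k+1) < dsum x (2*k+2) := dsum_lt (i := 2*k+1) h
    have h2 : ((2:ℝ) ^ dsum x (2*k+2))⁻¹ ≤ ((2:ℝ) ^ dsum x (2*k+1))⁻¹ := by
      apply inv_anti₀ (by positivity)
      exact pow_le_pow_right₀ (by norm_num) (le_of_lt hlt)
    linarith

lemma qmTerm_zero_le_half (x : ℝ) : qmTerm x 0 ≤ 1/2 := by
  rw [qmTerm_def]; split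
  · norm_num
  · rename_i h
    rw [pow_zero, one_mul]
    have h1 : 1 ≤ dsum x 0 := by
      have : dsum x 0 = cfDigit x 0 := by simp [dsum]
      omega
    calc ((2:ℝ) ^ dsum x 0)⁻¹ ≤ ((2:ℝ)^(1:ℕ))⁻¹ := by
          apply inv_anti₀ (by positivity)
          exact pow_le_pow_right₀ (by norm_num) h1
      _ = 1/2 := by norm_num

lemma tsum_qmTerm_nonneg {x : ℝ} (hx : x ∈ Set.Icc (0:ℝ) 1) : 0 ≤ ∑' i, qmTerm x i := by
  have hs := (summable_qmTerm hx).hasSum.tendsto_sum_nat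
  have h2 : Filter.Tendsto (fun k : ℕ => ∑ i ∈ Finset.range (2*k), qmTerm x i)
      Filter.atTop (nhds (∑' i, qmTerm x i)) :=
    hs.comp (Filter.tendsto_atTop_atTop_of_monotone (fun a b h => by omega)
      (fun n => ⟨n, by omega⟩))
  apply ge_of_tendsto h2
  filter_upwards with k
  induction k with
  | zero => simp
  | succ n ih =>
    have : 2*(n+1) = 2*n + 1 + 1 := by ring
    rw [this, Finset.sum_range_succ, Finset.sum_range_succ]
    have := pair_lower hx n
    linarith

lemma tsum_qmTerm_le_half {x : ℝ} (hx : x ∈ Set.Icc (0:ℝ) 1) : ∑' i, qmTerm x i ≤ 1/2 := by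
  have hs := (summable_qmTerm hx).hasSum.tendsto_sum_nat
  have h2 : Filter.Tendsto (fun k : ℕ => ∑ i ∈ Finset.range (2*k+1), qmTerm x i)
      Filter.atTop (nhds (∑' i, qmTerm x i)) :=
    hs.comp (Filter.tendsto_atTop_atTop_of_monotone (fun a b h => by omega)
      (fun n => ⟨n, by omega⟩))
  apply le_of_tendsto h2
  filter_upwards with k
  induction k with
  | zero => simpa using qmTerm_zero_le_half x
  | succ n ih =>
    have : 2*(n+1)+1 = (2*n+1) + 1 + 1 := by ring
    rw [this, Finset.sum_range_succ, Finset.sum_range_succ]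
    have := pair_upper hx n
    have e1 : 2*n+1+1 = 2*n+2 := by ring
    rw [e1]
    linarith

lemma questionMark_eq (x : ℝ) : questionMark x = 2 * ∑' i, qmTerm x i := rfl

lemma questionMark_nonneg {x : ℝ} (hx : x ∈ Set.Icc (0:ℝ) 1) : 0 ≤ questionMark x := by
  rw [questionMark_eq]; have := tsum_qmTerm_nonneg hx; linarith

lemma questionMark_le_one {x : ℝ} (hx : x ∈ Set.Icc (0:ℝ) 1) : questionMark x ≤ 1 := by
  rw [questionMark_eq]; have := tsum_qmTerm_le_half hx; linarith

lemma cfDigit_succ (x : ℝ) (i : ℕ) : cfDigit x (i+1) = cfDigit (gaussMap x) i := by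
  simp [cfDigit, Function.iterate_succ_apply]

lemma questionMark_zero : questionMark 0 = 0 := by
  have h : ∀ i, qmTerm 0 i = 0 := by
    intro i
    have : gaussMap^[i] (0:ℝ) = 0 := Function.iterate_fixed gaussMap_zero i
    have hd : cfDigit 0 i = 0 := by simp [cfDigit, this]
    rw [qmTerm_def, if_pos hd]
  rw [questionMark_eq, tsum_congr h, tsum_zero, mul_zero]

/-- Functional equation on `(1/2, 1]`. -/
lemma questionMark_high {x : ℝ} (hx : x ∈ Set.Ioc (1/2 : ℝ) 1) :
    questionMark x = 1 - questionMark (gaussMap x) / 2 := by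
  obtain ⟨hx1, hx2⟩ := hx
  have hx0 : 0 < x := lt_trans (by norm_num) hx1
  have hinv1 : (1:ℝ) ≤ x⁻¹ := one_le_inv_iff₀.mpr ⟨hx0, hx2⟩
  have hinv2 : x⁻¹ < 2 := by
    rw [inv_lt_iff_one_lt_mul₀ hx0]; linarith
  have hfl : ⌊x⁻¹⌋ = 1 := by
    apply Int.floor_eq_iff.mpr <;> simp <;> constructor <;> [exact hinv1; exact_mod_cast hinv2]
  have hd0 : cfDigit x 0 = 1 := by simp [cfDigit, hfl]
  have hG : gaussMap x ∈ Set.Icc (0:ℝ) 1 := gaussMap_mem ⟨le_of_lt hx0, hx2⟩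
  have hdsum : ∀ i, dsum x (i+1) = 1 + dsum (gaussMap x) i := by
    intro i
    rw [dsum, dsum, Finset.sum_range_succ']
    simp only [cfDigit_succ x, hd0]
    omega
  have hterm : ∀ i, qmTerm x (i+1) = -(1/2) * qmTerm (gaussMap x) i := by
    intro i
    rw [qmTerm_def, qmTerm_def, cfDigit_succ x i]
    split
    · ring
    · rw [hdsum i, pow_add, pow_succ]
      ring_nf
    
  have hq0 : qmTerm x 0 = 1/2 := by
    rw [qmTerm_def, if_neg (by omega), pow_zero, one_mul]
    have : dsum x 0 = 1 := by simp [dsum, hd0]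
    rw [this]; norm_num
  have hsum : Summable (qmTerm x) := summable_qmTerm ⟨le_of_lt hx0, hx2⟩
  rw [questionMark_eq, questionMark_eq, hsum.tsum_eq_zero_add, hq0]
  have : ∑' i, qmTerm x (i+1) = -(1/2) * ∑' i, qmTerm (gaussMap x) i := by
    rw [← tsum_mul_left]
    exact tsum_congr hterm
  rw [this]
  ring

/-- Functional equation on `(0, 1/2]`. -/
lemma questionMark_low {x : ℝ} (hx : x ∈ Set.Ioc (0:ℝ) (1/2)) :
    questionMark (x / (1 - x)) = 2 * questionMark x := by
  obtain ⟨hx0, hx2⟩ := hx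
  have h1x : (0:ℝ) < 1 - x := by linarith
  set y := x / (1 - x) with hy
  have hyinv : y⁻¹ = x⁻¹ - 1 := by
    rw [hy]
    field_simp
  have hxinv2 : (2:ℝ) ≤ x⁻¹ := by
    rw [← one_div]
    exact (le_div_iff₀ hx0).mpr (by linarith)
  have hfl : ⌊y⁻¹⌋ = ⌊x⁻¹⌋ - 1 := by
    rw [hyinv]
    exact_mod_cast Int.floor_sub_intCast x⁻¹ 1
  have hflx : (2:ℤ) ≤ ⌊x⁻¹⌋ := by
    apply Int.le_floor.mpr; exact_mod_cast hxinv2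
  have hdx0 : 2 ≤ cfDigit x 0 := by
    simp only [cfDigit, Function.iterate_zero, id]
    omega
  have hdy0 : cfDigit y 0 + 1 = cfDigit x 0 := by
    simp only [cfDigit, Function.iterate_zero, id, hfl]
    omega
  have hGy : gaussMap y = gaussMap x := by
    rw [gaussMap, gaussMap, hyinv]
    have := Int.fract_sub_intCast x⁻¹ 1
    exact_mod_cast this
  have hdsucc : ∀ i, cfDigit y (i+1) = cfDigit x (i+1) := by
    intro i
    rw [cfDigit_succ, cfDigit_succ, hGy]
  have hdzero : ∀ i, (cfDigit y i = 0 ↔ cfDigit x i = 0) := by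
    intro i
    cases i with
    | zero => constructor <;> intro h <;> omega
    | succ n => rw [hdsucc n]
  have hdsum : ∀ i, dsum y i + 1 = dsum x i := by
    intro i
    rw [dsum, dsum, Finset.sum_range_succ', Finset.sum_range_succ']
    simp only [hdsucc]
    omega
  have hterm : ∀ i, qmTerm y i = 2 * qmTerm x i := by
    intro i
    rw [qmTerm_def, qmTerm_def]
    rcases Classical.em (cfDigit x i = 0) with h | h
    · rw [if_pos h, if_pos ((hdzero i).mpr h)]; ring
    · rw [if_neg h, if_neg (fun h' => h ((hdzero i).mp h'))]
      rw [← hdsum i, pow_add, pow_one]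
      field_simp
  rw [questionMark_eq, questionMark_eq]
  rw [tsum_congr hterm, tsum_mul_left]

lemma keplerSeq_one : keplerSeq 1 = 1/2 := by rw [keplerSeq]; norm_num

lemma keplerSeq_even {j : ℕ} (hj : 1 ≤ j) :
    keplerSeq (2*j) = keplerSeq j / (keplerSeq j + 1) := by
  rw [keplerSeq]
  have h1 : ¬ (2*j ≤ 1) := by omega
  have h2 : 2*j/2 = j := by omega
  have h3 : 2*j % 2 = 0 := by omega
  simp [h1, h2, h3, keplerStep]

lemma keplerSeq_odd {j : ℕ} (hj : 1 ≤ j) :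
    keplerSeq (2*j+1) = 1 / (keplerSeq j + 1) := by
  rw [keplerSeq]
  have h1 : ¬ (2*j+1 ≤ 1) := by omega
  have h2 : (2*j+1)/2 = j := by omega
  have h3 : (2*j+1) % 2 = 1 := by omega
  simp [h1, h2, h3, keplerStep]

lemma keplerSeq_mem_s8 {n : ℕ} (hn : 1 ≤ n) : keplerSeq n ∈ Set.Ioo (0:ℚ) 1 := by
  induction n using Nat.strong_induction_on with
  | _ n ih =>
    rcases Nat.lt_or_ge n 2 with h | h
    · have : n = 1 := by omega
      subst this
      rw [keplerSeq_one]; constructor <;> norm_num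
    · have hpar : n = 2*(n/2) ∨ n = 2*(n/2)+1 := by omega
      have hj : 1 ≤ n/2 := by omega
      obtain ⟨hv0, hv1⟩ := ih (n/2) (by omega) hj
      have hd : (0:ℚ) < keplerSeq (n/2) + 1 := by linarith
      rcases hpar with h' | h'
      · rw [h', keplerSeq_even hj]
        constructor
        · positivity
        · rw [div_lt_one hd]; linarith
      · rw [h', keplerSeq_odd hj]
        constructor
        · positivity
        · rw [div_lt_one hd]; linarith

lemma keplerSeq_even_lt {j : ℕ} (hj : 1 ≤ j) : keplerSeq (2*j) < 1/2 := by
  obtain ⟨h0, h1⟩ := keplerSeq_mem_s8 hj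
  rw [keplerSeq_even hj, div_lt_iff₀ (by linarith)]
  linarith

lemma keplerSeq_odd_gt {j : ℕ} (hj : 1 ≤ j) : 1/2 < keplerSeq (2*j+1) := by
  obtain ⟨h0, h1⟩ := keplerSeq_mem_s8 hj
  rw [keplerSeq_odd hj, lt_div_iff₀ (by linarith)]
  linarith

lemma keplerSeq_injective : ∀ i j : ℕ, 1 ≤ i → 1 ≤ j → keplerSeq i = keplerSeq j → i = j := by
  intro i
  induction i using Nat.strong_induction_on with
  | _ i ih =>
    intro j hi hj heq
    rcases Nat.lt_or_ge i 2 with h1 | h1 <;> rcases Nat.lt_or_ge j 2 with h2 | h2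
    · omega
    · -- i = 1, j ≥ 2
      exfalso
      have hi1 : i = 1 := by omega
      subst hi1
      rw [keplerSeq_one] at heq
      have hpar : j = 2*(j/2) ∨ j = 2*(j/2)+1 := by omega
      have hjj : 1 ≤ j/2 := by omega
      rcases hpar with h' | h'
      · have := keplerSeq_even_lt hjj; rw [← h'] at this; linarith [heq ▸ this]
      · have := keplerSeq_odd_gt hjj; rw [← h'] at this; linarith [heq ▸ this]
    · exfalso
      have hj1 : j = 1 := by omega
      subst hj1
      rw [keplerSeq_one] at heq
      have hpar : i = 2*(i/2) ∨ i = 2*(i/2)+1 := by omega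
      have hii : 1 ≤ i/2 := by omega
      rcases hpar with h' | h'
      · have := keplerSeq_even_lt hii; rw [← h'] at this; linarith
      · have := keplerSeq_odd_gt hii; rw [← h'] at this; linarith
    · have hii : 1 ≤ i/2 := by omega
      have hjj : 1 ≤ j/2 := by omega
      have hpi : i = 2*(i/2) ∨ i = 2*(i/2)+1 := by omega
      have hpj : j = 2*(j/2) ∨ j = 2*(j/2)+1 := by omega
      obtain ⟨hu0, hu1⟩ := keplerSeq_mem_s8 hii
      obtain ⟨hw0, hw1⟩ := keplerSeq_mem_s8 hjj
      have hud : (0:ℚ) < keplerSeq (i/2) + 1 := by linarith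
      have hwd : (0:ℚ) < keplerSeq (j/2) + 1 := by linarith
      have hparent : keplerSeq (i/2) = keplerSeq (j/2) ∧ (i % 2 = j % 2) := by
        rcases hpi with h' | h' <;> rcases hpj with h'' | h''
        · rw [h', h''] at heq
          rw [keplerSeq_even hii, keplerSeq_even hjj] at heq
          rw [div_eq_div_iff (ne_of_gt hud) (ne_of_gt hwd)] at heq
          constructor
          · nlinarith [heq]
          · omega
        · exfalso
          rw [h', h''] at heq
          have := keplerSeq_even_lt hii
          have := keplerSeq_odd_gt hjj
          linarith [heq]
        · exfalso
          rw [h', h''] at heq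
          have := keplerSeq_odd_gt hii
          have := keplerSeq_even_lt hjj
          linarith [heq]
        · rw [h', h''] at heq
          rw [keplerSeq_odd hii, keplerSeq_odd hjj] at heq
          rw [div_eq_div_iff (ne_of_gt hud) (ne_of_gt hwd)] at heq
          constructor
          · linarith
          · omega
      have := ih (i/2) (by omega) (j/2) hii hjj hparent.1
      omega

open Classical in
noncomputable def cnt (x : ℝ) (n : ℕ) : ℕ :=
  ∑ i ∈ Finset.Icc 1 n, if ((keplerSeq i : ℚ) : ℝ) ≤ x then 1 else 0

lemma cnt_le (x : ℝ) (n : ℕ) : cnt x n ≤ n := by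
  classical
  calc cnt x n ≤ ∑ i ∈ Finset.Icc 1 n, 1 := Finset.sum_le_sum (fun i _ => by split <;> omega)
    _ = n := by simp

lemma sum_split (f : ℕ → ℕ) : ∀ n : ℕ, 1 ≤ n →
    ∑ i ∈ Finset.Icc 1 n, f i =
      f 1 + ∑ j ∈ Finset.Icc 1 (n/2), f (2*j) + ∑ j ∈ Finset.Icc 1 ((n-1)/2), f (2*j+1) := by
  intro n
  induction n with
  | zero => omega
  | succ n ih =>
    intro _
    rcases Nat.lt_or_ge n 1 with h | h
    · have : n = 0 := by omega
      subst this
      simp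
    · rw [show Finset.Icc 1 (n+1) = Finset.Icc 1 n ∪ {n+1} by
        ext a; simp [Finset.mem_Icc]; omega]
      rw [Finset.sum_union (by simp [Finset.mem_Icc])]
      rw [ih h]
      simp only [Finset.sum_singleton]
      rcases Nat.even_or_odd (n+1) with he | ho <;> [obtain ⟨k,hk⟩ := he; obtain ⟨k,hk⟩ := ho]
      · -- n+1 even : even sum gains index (n+1)/2
        have h1 : (n+1)/2 = n/2 + 1 := by omega
        have h2 : (n+1-1)/2 = (n-1)/2 := by omega
        rw [h1, h2]
        rw [show Finset.Icc 1 (n/2+1) = Finset.Icc 1 (n/2) ∪ {n/2+1} by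
          ext a; simp [Finset.mem_Icc]; omega]
        rw [Finset.sum_union (by simp [Finset.mem_Icc]; try omega)]
        simp only [Finset.sum_singleton]
        have : 2*(n/2+1) = n+1 := by omega
        rw [this]
        ring
      · -- n+1 odd : odd sum gains index (n+1-1)/2 = n/2... j with 2j+1 = n+1
        have h1 : (n+1)/2 = n/2 := by omega
        have h2 : (n+1-1)/2 = (n-1)/2 + 1 := by omega
        rw [h1, h2]
        rw [show Finset.Icc 1 ((n-1)/2+1) = Finset.Icc 1 ((n-1)/2) ∪ {(n-1)/2+1} by
          ext a; simp [Finset.mem_Icc]; omega]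
        rw [Finset.sum_union (by simp [Finset.mem_Icc]; try omega)]
        simp only [Finset.sum_singleton]
        have : 2*((n-1)/2+1)+1 = n+1 := by omega
        rw [this]
        ring

lemma keplerSeq_memR {n : ℕ} (hn : 1 ≤ n) : ((keplerSeq n : ℚ) : ℝ) ∈ Set.Ioo (0:ℝ) 1 := by
  obtain ⟨h0, h1⟩ := keplerSeq_mem_s8 hn
  exact ⟨by exact_mod_cast h0, by exact_mod_cast h1⟩

open Classical in
lemma cnt_rec_low {x : ℝ} (hx0 : 0 ≤ x) (hx2 : x ≤ 1/2) {n : ℕ} (hn : 1 ≤ n) :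
    cnt (x/(1-x)) ((n-1)/2) ≤ cnt x n ∧ cnt x n ≤ cnt (x/(1-x)) ((n-1)/2) + 2 := by
  classical
  have h1x : (0:ℝ) < 1 - x := by linarith
  set y := x/(1-x) with hy
  have hind : ∀ j : ℕ, 1 ≤ j →
      ((if ((keplerSeq (2*j) : ℚ) : ℝ) ≤ x then 1 else 0) : ℕ)
        = if ((keplerSeq j : ℚ) : ℝ) ≤ y then 1 else 0 := by
    intro j hj
    obtain ⟨hv0, hv1⟩ := keplerSeq_memR hj
    set w : ℝ := ((keplerSeq j : ℚ) : ℝ)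
    have hcast : ((keplerSeq (2*j) : ℚ) : ℝ) = w / (w + 1) := by
      rw [keplerSeq_even hj]; push_cast; ring
    rw [hcast]
    have hiff : w / (w+1) ≤ x ↔ w ≤ y := by
      rw [div_le_iff₀ (by linarith), hy, le_div_iff₀ h1x]
      constructor <;> intro <;> nlinarith
    simp only [hiff]
  have hodd : ∀ j : ℕ, 1 ≤ j →
      ((if ((keplerSeq (2*j+1) : ℚ) : ℝ) ≤ x then 1 else 0) : ℕ) = 0 := by
    intro j hj
    have h := keplerSeq_odd_gt hj
    have h2 : (((1:ℚ)/2 : ℚ) : ℝ) < ((keplerSeq (2*j+1) : ℚ) : ℝ) := Rat.cast_lt.mpr h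
    push_cast at h2
    rw [if_neg (by linarith)]
  have hsplit := sum_split (fun i => if ((keplerSeq i : ℚ) : ℝ) ≤ x then 1 else 0) n hn
  have hoddsum : ∑ j ∈ Finset.Icc 1 ((n-1)/2),
      (if ((keplerSeq (2*j+1) : ℚ) : ℝ) ≤ x then 1 else 0) = 0 := by
    apply Finset.sum_eq_zero
    intro j hj
    exact hodd j (Finset.mem_Icc.mp hj).1
  have hevensub : ∑ j ∈ Finset.Icc 1 ((n-1)/2),
      (if ((keplerSeq (2*j) : ℚ) : ℝ) ≤ x then 1 else 0) = cnt y ((n-1)/2) := by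
    rw [cnt]
    apply Finset.sum_congr rfl
    intro j hj
    exact hind j (Finset.mem_Icc.mp hj).1
  have hcases : n/2 = (n-1)/2 ∨ n/2 = (n-1)/2 + 1 := by omega
  have hbound : cnt y ((n-1)/2) ≤ ∑ j ∈ Finset.Icc 1 (n/2),
      (if ((keplerSeq (2*j) : ℚ) : ℝ) ≤ x then 1 else 0) ∧
      ∑ j ∈ Finset.Icc 1 (n/2), (if ((keplerSeq (2*j) : ℚ) : ℝ) ≤ x then 1 else 0)
        ≤ cnt y ((n-1)/2) + 1 := by
    rcases hcases with h | h
    · rw [h, hevensub]; omega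
    · rw [h, show Finset.Icc 1 ((n-1)/2+1) = Finset.Icc 1 ((n-1)/2) ∪ {(n-1)/2+1} by
        ext a; simp [Finset.mem_Icc]; omega]
      rw [Finset.sum_union (by simp [Finset.mem_Icc]; try omega)]
      rw [hevensub]
      simp only [Finset.sum_singleton]
      constructor
      · omega
      · split <;> omega
  have hc : cnt x n = (if ((keplerSeq 1 : ℚ) : ℝ) ≤ x then 1 else 0)
      + (∑ j ∈ Finset.Icc 1 (n/2), if ((keplerSeq (2*j) : ℚ) : ℝ) ≤ x then 1 else 0)
      + (∑ j ∈ Finset.Icc 1 ((n-1)/2), if ((keplerSeq (2*j+1) : ℚ) : ℝ) ≤ x then 1 else 0) :=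
    hsplit
  rw [hoddsum, add_zero] at hc
  have h1le : (if ((keplerSeq 1 : ℚ) : ℝ) ≤ x then 1 else 0) ≤ 1 := by split <;> omega
  omega

open Classical in
lemma cnt_rec_high {x : ℝ} (hx1 : 1/2 < x) (hx2 : x ≤ 1) {n : ℕ} (hn : 1 ≤ n) :
    1 + n/2 + (n-1)/2 ≤ cnt x n + cnt (x⁻¹ - 1) ((n-1)/2) ∧
      cnt x n + cnt (x⁻¹ - 1) ((n-1)/2) ≤ 2 + n/2 + (n-1)/2 := by
  classical
  have hx0 : (0:ℝ) < x := by linarith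
  set y := x⁻¹ - 1 with hy
  set m := (n-1)/2 with hm
  -- f 1 = 1
  have hf1 : (if ((keplerSeq 1 : ℚ) : ℝ) ≤ x then 1 else 0) = 1 := by
    rw [keplerSeq_one, if_pos (by push_cast; linarith)]
  -- even terms are 1
  have heven : ∀ j : ℕ, 1 ≤ j →
      ((if ((keplerSeq (2*j) : ℚ) : ℝ) ≤ x then 1 else 0) : ℕ) = 1 := by
    intro j hj
    have h := keplerSeq_even_lt hj
    have h2 : ((keplerSeq (2*j) : ℚ) : ℝ) < (((1:ℚ)/2 : ℚ) : ℝ) := Rat.cast_lt.mpr h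
    push_cast at h2
    rw [if_pos (by linarith)]
  -- odd terms
  have hodd : ∀ j : ℕ, 1 ≤ j →
      ((if ((keplerSeq (2*j+1) : ℚ) : ℝ) ≤ x then 1 else 0) : ℕ)
        = 1 - (if ((keplerSeq j : ℚ) : ℝ) < y then 1 else 0) := by
    intro j hj
    obtain ⟨hv0, hv1⟩ := keplerSeq_memR hj
    set w : ℝ := ((keplerSeq j : ℚ) : ℝ)
    have hcast : ((keplerSeq (2*j+1) : ℚ) : ℝ) = 1 / (w + 1) := by
      rw [keplerSeq_odd hj]; push_cast; ring
    rw [hcast]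
    have hinv : x⁻¹ * x = 1 := inv_mul_cancel₀ (ne_of_gt hx0)
    have hiff : 1 / (w+1) ≤ x ↔ y ≤ w := by
      rw [div_le_iff₀ (by linarith), hy]
      constructor <;> intro <;> nlinarith
    rcases le_or_gt y w with h | h
    · rw [if_pos (hiff.mpr h), if_neg (not_lt.mpr h)]
    · rw [if_neg (fun hc => absurd (hiff.mp hc) (not_le.mpr h)), if_pos h]
  have hsplit : cnt x n = (if ((keplerSeq 1 : ℚ) : ℝ) ≤ x then 1 else 0)
      + (∑ j ∈ Finset.Icc 1 (n/2), if ((keplerSeq (2*j) : ℚ) : ℝ) ≤ x then 1 else 0)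
      + (∑ j ∈ Finset.Icc 1 m, if ((keplerSeq (2*j+1) : ℚ) : ℝ) ≤ x then 1 else 0) :=
    sum_split _ n hn
  have hevensum : ∑ j ∈ Finset.Icc 1 (n/2),
      (if ((keplerSeq (2*j) : ℚ) : ℝ) ≤ x then 1 else 0) = n/2 := by
    rw [Finset.sum_congr rfl (fun j hj => heven j (Finset.mem_Icc.mp hj).1)]
    simp
  set cntlt : ℕ := ∑ j ∈ Finset.Icc 1 m, (if ((keplerSeq j : ℚ) : ℝ) < y then 1 else 0)
    with hcntlt
  have hltle : ∀ j ∈ Finset.Icc 1 m, (if ((keplerSeq j : ℚ) : ℝ) < y then 1 else 0) ≤ 1 := by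
    intro j _; split <;> omega
  have hcntltle : cntlt ≤ m := by
    calc cntlt ≤ ∑ _j ∈ Finset.Icc 1 m, 1 := Finset.sum_le_sum hltle
      _ = m := by simp
  have hoddsum : ∑ j ∈ Finset.Icc 1 m,
      (if ((keplerSeq (2*j+1) : ℚ) : ℝ) ≤ x then 1 else 0) = m - cntlt := by
    rw [Finset.sum_congr rfl (fun j hj => hodd j (Finset.mem_Icc.mp hj).1)]
    have key : ∑ j ∈ Finset.Icc 1 m, (1 - if ((keplerSeq j : ℚ) : ℝ) < y then 1 else 0)
        + cntlt = m := by
      rw [hcntlt, ← Finset.sum_add_distrib]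
      have : ∀ j ∈ Finset.Icc 1 m,
          (1 - if ((keplerSeq j : ℚ) : ℝ) < y then 1 else 0)
            + (if ((keplerSeq j : ℚ) : ℝ) < y then 1 else 0) = 1 := by
        intro j _; split <;> omega
      rw [Finset.sum_congr rfl this]
      simp
    omega
  -- counting with equality
  have hceq : (∑ j ∈ Finset.Icc 1 m, if ((keplerSeq j : ℚ) : ℝ) = y then 1 else 0) ≤ 1 := by
    rw [← Finset.card_filter]
    apply Finset.card_le_one.mpr
    intro a ha b hb
    simp only [Finset.mem_filter, Finset.mem_Icc] at ha hb
    have : keplerSeq a = keplerSeq b := by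
      apply Rat.cast_injective (α := ℝ)
      rw [ha.2, hb.2]
    exact keplerSeq_injective a b ha.1.1 hb.1.1 this
  have hcnty : cnt y m = cntlt
      + ∑ j ∈ Finset.Icc 1 m, (if ((keplerSeq j : ℚ) : ℝ) = y then 1 else 0) := by
    rw [cnt, hcntlt, ← Finset.sum_add_distrib]
    apply Finset.sum_congr rfl
    intro j _
    rcases lt_trichotomy ((keplerSeq j : ℚ) : ℝ) y with h | h | h
    · rw [if_pos (le_of_lt h), if_pos h, if_neg (ne_of_lt h)]
    · rw [if_pos (le_of_eq h), if_neg (by rw [h]; exact lt_irrefl y), if_pos h]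
    · rw [if_neg (not_le.mpr h), if_neg (not_lt.mpr (le_of_lt h)), if_neg (ne_of_gt h)]
  rw [hsplit, hf1, hevensum, hoddsum]
  omega

lemma gaussMap_high {x : ℝ} (hx1 : 1/2 < x) (hx2 : x ≤ 1) : gaussMap x = x⁻¹ - 1 := by
  have hx0 : 0 < x := by linarith
  have hinv1 : (1:ℝ) ≤ x⁻¹ := one_le_inv_iff₀.mpr ⟨hx0, hx2⟩
  have hinv2 : x⁻¹ < 2 := by
    rw [inv_lt_iff_one_lt_mul₀ hx0]; linarith
  have hfl : ⌊x⁻¹⌋ = 1 := by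
    apply Int.floor_eq_iff.mpr
    constructor
    · exact_mod_cast hinv1
    · push_cast; linarith
  rw [gaussMap, Int.fract, hfl]
  push_cast
  ring

lemma cnt_x_zero (n : ℕ) : cnt 0 n = 0 := by
  classical
  apply Finset.sum_eq_zero
  intro i hi
  have := (keplerSeq_memR (Finset.mem_Icc.mp hi).1).1
  rw [if_neg (by linarith)]

lemma abs_m_half {n : ℕ} (hn : 1 ≤ n) : |(((n-1)/2 : ℕ) : ℝ) - n/2| ≤ 1 := by
  have h1 : 2 * ((n-1)/2) ≤ n := by omega
  have h2 : n ≤ 2*((n-1)/2) + 2 := by omega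
  have h1' : 2 * (((n-1)/2 : ℕ) : ℝ) ≤ (n:ℝ) := by exact_mod_cast h1
  have h2' : (n:ℝ) ≤ 2 * (((n-1)/2 : ℕ) : ℝ) + 2 := by exact_mod_cast h2
  rw [abs_le]
  constructor <;> linarith

lemma main_bound : ∀ n : ℕ, ∀ x : ℝ, x ∈ Set.Icc (0:ℝ) 1 →
    |(cnt x n : ℝ) - n * questionMark x| ≤ 4 * ((Nat.log 2 n : ℝ) + 1) := by
  intro n
  induction n using Nat.strong_induction_on with
  | _ n ih =>
    intro x hx
    obtain ⟨hx0, hx1⟩ := hx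
    have hqm0 : 0 ≤ questionMark x := questionMark_nonneg ⟨hx0, hx1⟩
    have hqm1 : questionMark x ≤ 1 := questionMark_le_one ⟨hx0, hx1⟩
    have hlog0 : (0:ℝ) ≤ (Nat.log 2 n : ℝ) := by positivity
    rcases Nat.lt_or_ge n 5 with hsmall | hbig
    · -- small case
      have hA0 : (0:ℝ) ≤ cnt x n := by positivity
      have hAn : (cnt x n : ℝ) ≤ n := by exact_mod_cast cnt_le x n
      have hb0 : (0:ℝ) ≤ n * questionMark x := by positivity
      have hbn : n * questionMark x ≤ n := by
        calc n * questionMark x ≤ n * 1 := by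
              apply mul_le_mul_of_nonneg_left hqm1 (by positivity)
          _ = n := mul_one _
      rw [abs_le]
      have hn4 : (n:ℝ) ≤ 4 := by exact_mod_cast Nat.lt_succ_iff.mp hsmall
      constructor <;> nlinarith
    · -- n ≥ 5
      have hn1 : 1 ≤ n := by omega
      set m := (n-1)/2 with hm
      have hmlt : m < n := by omega
      have hm1 : 1 ≤ m := by omega
      have hlogm : (Nat.log 2 m : ℝ) ≤ (Nat.log 2 n : ℝ) - 1 := by
        have h1 : Nat.log 2 m ≤ Nat.log 2 (n/2) := Nat.log_mono_right (by omega)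
        have h2 : Nat.log 2 (n/2) = Nat.log 2 n - 1 := Nat.log_div_base 2 n
        have h3 : 2 ≤ Nat.log 2 n := by
          calc 2 = Nat.log 2 4 := by
                rw [show (4:ℕ) = 2^2 by norm_num, Nat.log_pow (by norm_num)]
            _ ≤ Nat.log 2 n := Nat.log_mono_right (by omega)
        have h4 : Nat.log 2 m + 1 ≤ Nat.log 2 n := by omega
        have h4' : (Nat.log 2 m : ℝ) + 1 ≤ (Nat.log 2 n : ℝ) := by exact_mod_cast h4
        linarith
      have habsm : |(m:ℝ) - n/2| ≤ 1 := hm ▸ abs_m_half hn1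
      rcases eq_or_lt_of_le hx0 with hxz | hxpos
      · -- x = 0
        rw [← hxz, cnt_x_zero, questionMark_zero]
        simp only [Nat.cast_zero, mul_zero, sub_zero, abs_zero]
        positivity
      rcases le_or_gt x (1/2) with hxhalf | hxhigh
      · -- 0 < x ≤ 1/2
        set y := x / (1-x) with hy
        have h1x : (0:ℝ) < 1 - x := by linarith
        have hy0 : 0 ≤ y := by positivity
        have hy1 : y ≤ 1 := by
          rw [hy, div_le_one h1x]; linarith
        have hq : questionMark y = 2 * questionMark x := questionMark_low ⟨hxpos, hxhalf⟩
        have hyq0 : 0 ≤ questionMark y := questionMark_nonneg ⟨hy0, hy1⟩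
        have hyq1 : questionMark y ≤ 1 := questionMark_le_one ⟨hy0, hy1⟩
        obtain ⟨hr1, hr2⟩ := cnt_rec_low (le_of_lt hxpos) hxhalf hn1 (n := n)
        rw [← hy, ← hm] at hr1 hr2
        have hIH := ih m hmlt y ⟨hy0, hy1⟩
        have hr1' : ((cnt y m : ℕ) : ℝ) ≤ ((cnt x n : ℕ) : ℝ) := by exact_mod_cast hr1
        have hr2' : ((cnt x n : ℕ) : ℝ) ≤ ((cnt y m : ℕ) : ℝ) + 2 := by exact_mod_cast hr2
        set A : ℝ := ((cnt x n : ℕ) : ℝ)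
        set B : ℝ := ((cnt y m : ℕ) : ℝ)
        have hprod : |((m:ℝ) - n/2) * questionMark y| ≤ 1 := by
          rw [abs_mul]
          calc |(m:ℝ) - n/2| * |questionMark y| ≤ 1 * 1 := by
                apply mul_le_mul habsm (by rw [abs_of_nonneg hyq0]; exact hyq1)
                  (abs_nonneg _) (by norm_num)
            _ = 1 := by norm_num
        have hdecomp : A - n * questionMark x
            = (A - B) + (B - m * questionMark y) + ((m:ℝ) - n/2) * questionMark y := by
          have : n * questionMark x = (n/2) * questionMark y := by
            rw [hq]; ring
          rw [this]; ring
        rw [hdecomp]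
        rw [abs_le] at hIH hprod ⊢
        constructor <;> linarith [hIH.1, hIH.2, hprod.1, hprod.2]
      · -- 1/2 < x ≤ 1
        set y := x⁻¹ - 1 with hy
        have hx0' : (0:ℝ) < x := by linarith
        have hinv1 : (1:ℝ) ≤ x⁻¹ := one_le_inv_iff₀.mpr ⟨hx0', hx1⟩
        have hinv2 : x⁻¹ < 2 := by rw [inv_lt_iff_one_lt_mul₀ hx0']; linarith
        have hy0 : 0 ≤ y := by rw [hy]; linarith
        have hy1 : y ≤ 1 := by rw [hy]; linarith
        have hq : questionMark x = 1 - questionMark y / 2 := by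
          have := questionMark_high ⟨hxhigh, hx1⟩
          rwa [gaussMap_high hxhigh hx1] at this
        have hyq0 : 0 ≤ questionMark y := questionMark_nonneg ⟨hy0, hy1⟩
        have hyq1 : questionMark y ≤ 1 := questionMark_le_one ⟨hy0, hy1⟩
        obtain ⟨hr1, hr2⟩ := cnt_rec_high hxhigh hx1 hn1
        rw [← hy, ← hm] at hr1 hr2
        have hIH := ih m hmlt y ⟨hy0, hy1⟩
        have hsum : 1 + n/2 + m = n := by omega
        have hr1' : (n:ℝ) ≤ ((cnt x n : ℕ) : ℝ) + ((cnt y m : ℕ) : ℝ) := by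
          have h : n ≤ cnt x n + cnt y m := by omega
          exact_mod_cast h
        have hr2' : ((cnt x n : ℕ) : ℝ) + ((cnt y m : ℕ) : ℝ) ≤ (n:ℝ) + 1 := by
          have h : cnt x n + cnt y m ≤ n + 1 := by omega
          exact_mod_cast h
        set A : ℝ := ((cnt x n : ℕ) : ℝ)
        set B : ℝ := ((cnt y m : ℕ) : ℝ)
        have hprod : |((n:ℝ)/2 - m) * questionMark y| ≤ 1 := by
          rw [abs_mul]
          calc |(n:ℝ)/2 - m| * |questionMark y| ≤ 1 * 1 := by
                apply mul_le_mul (by rw [abs_sub_comm]; exact habsm)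
                  (by rw [abs_of_nonneg hyq0]; exact hyq1) (abs_nonneg _) (by norm_num)
            _ = 1 := by norm_num
        have hdecomp : A - n * questionMark x
            = (A + B - n) + ((n:ℝ)/2 - m) * questionMark y + (m * questionMark y - B) := by
          rw [hq]; ring
        rw [hdecomp]
        rw [abs_le] at hIH hprod ⊢
        constructor <;> linarith [hIH.1, hIH.2, hprod.1, hprod.2]

open Classical in
lemma ncard_eq_cnt (x : ℝ) (n : ℕ) :
    Set.ncard {i : ℕ | 1 ≤ i ∧ i ≤ n ∧ ((keplerSeq i : ℚ) : ℝ) ≤ x} = cnt x n := by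
  classical
  have hset : {i : ℕ | 1 ≤ i ∧ i ≤ n ∧ ((keplerSeq i : ℚ) : ℝ) ≤ x}
      = ↑((Finset.Icc 1 n).filter fun i => ((keplerSeq i : ℚ) : ℝ) ≤ x) := by
    ext i
    simp [Finset.mem_Icc, and_assoc]
  rw [hset, Set.ncard_coe_finset, Finset.card_filter]
  rfl

lemma tendsto_bound :
    Filter.Tendsto (fun n : ℕ => 4 * ((Nat.log 2 n : ℝ) + 1) / n) Filter.atTop (nhds 0) := by
  have h1 : Filter.Tendsto (fun n : ℕ => Real.log n / n) Filter.atTop (nhds 0) :=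
    Real.isLittleO_log_id_atTop.tendsto_div_nhds_zero.comp tendsto_natCast_atTop_atTop
  have h2 : Filter.Tendsto (fun n : ℕ => (1:ℝ)/n) Filter.atTop (nhds 0) :=
    tendsto_one_div_atTop_nhds_zero_nat
  have hu : Filter.Tendsto
      (fun n : ℕ => (4/Real.log 2) * (Real.log n / n) + 4 * ((1:ℝ)/n))
      Filter.atTop (nhds 0) := by
    have := (h1.const_mul (4/Real.log 2)).add (h2.const_mul 4)
    simpa using this
  apply tendsto_of_tendsto_of_tendsto_of_le_of_le' tendsto_const_nhds hu
  · filter_upwards with n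
    positivity
  · filter_upwards [Filter.eventually_ge_atTop 1] with n hn
    have hn0 : (0:ℝ) < n := by exact_mod_cast hn
    have hlog2 : (0:ℝ) < Real.log 2 := Real.log_pos (by norm_num)
    have hL : (Nat.log 2 n : ℝ) ≤ Real.log n / Real.log 2 := by
      have := Real.natLog_le_logb n 2
      rwa [Real.logb] at this
    have hsplit : 4 * ((Nat.log 2 n : ℝ) + 1) / n = 4*(Nat.log 2 n : ℝ)/n + 4/n := by
      ring
    have hr : (4/Real.log 2) * (Real.log n / n) + 4 * ((1:ℝ)/n)
        = 4*(Real.log n / Real.log 2)/n + 4/n := by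
      ring
    rw [hsplit, hr]
    gcongr


/-- **The Kepler enumeration is distributed according to the Minkowski question mark
function**: for every `x ∈ [0,1]`, the number of indices `1 ≤ i ≤ n` with `k_i ≤ x`,
divided by `n`, converges to `?(x)` as `n → ∞`. -/
theorem keplerSeq_equidistributed_questionMark (x : ℝ) (hx : x ∈ Set.Icc (0 : ℝ) 1) :
    Filter.Tendsto
      (fun n => ((Set.ncard {i : ℕ | 1 ≤ i ∧ i ≤ n ∧ ((keplerSeq i : ℚ) : ℝ) ≤ x} : ℝ)) / n)
      Filter.atTop (nhds (questionMark x)) := by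
  have hfun : (fun n : ℕ =>
      ((Set.ncard {i : ℕ | 1 ≤ i ∧ i ≤ n ∧ ((keplerSeq i : ℚ) : ℝ) ≤ x} : ℝ)) / n)
      = fun n : ℕ => (cnt x n : ℝ) / n := by
    funext n
    rw [ncard_eq_cnt]
  rw [hfun]
  have h0 : Filter.Tendsto (fun n : ℕ => (cnt x n : ℝ) / n - questionMark x)
      Filter.atTop (nhds 0) := by
    apply squeeze_zero_norm' (a := fun n : ℕ => 4 * ((Nat.log 2 n : ℝ) + 1) / n) _ tendsto_bound
    filter_upwards [Filter.eventually_ge_atTop 1] with n hn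
    have hn0 : (0:ℝ) < n := by exact_mod_cast hn
    have hb := main_bound n x hx
    have heq : (cnt x n : ℝ) / n - questionMark x
        = ((cnt x n : ℝ) - n * questionMark x) / n := by
      field_simp
    rw [Real.norm_eq_abs, heq, abs_div, abs_of_pos hn0]
    gcongr
  have := h0.add (tendsto_const_nhds (x := questionMark x))
  simpa using this
end
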